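/- arXiv:1110.4590 — 6 statements merged into one kernel-verified Lean document; each statement's English description precedes it below -/
import Mathlib

section
/- Let q > 3 be a prime. Then M(3;q) = 2; that is, |a_{3qr}(k)| ≤ 2 for every prime r > q and every integer k ≥ 0, and there exist a prime r > q and an integer k ≥ 0 with |a_{3qr}(k)| = 2. -/
open Polynomial

/-- `cyclCoeff n k` is the coefficient of `x^k` in the `n`-th cyclotomic polynomial over `ℤ`. -/
noncomputable def cyclCoeff (n k : ℕ) : ℤ := (Polynomial.cyclotomic n ℤ).coeff k

namespace Stmt3Aux

open Finset

section Aux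

lemma expand_cyc_prime (q t : ℕ) (hq : q.Prime) :
    expand ℤ t (cyclotomic q ℤ) = ∑ i ∈ range q, (X:ℤ[X])^(t*i) := by
  haveI : Fact q.Prime := ⟨hq⟩
  rw [cyclotomic_prime, map_sum]
  refine Finset.sum_congr rfl fun i _ => ?_
  rw [map_pow, expand_X, ← pow_mul]

lemma keyA (q r : ℕ) (hq : q.Prime) (hr : r.Prime) (hq3 : 3 < q) (hqr : q < r) :
    cyclotomic (3*q*r) ℤ * (expand ℤ r (cyclotomic q ℤ) * expand ℤ 3 (cyclotomic q ℤ))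
      = expand ℤ (3*r) (cyclotomic q ℤ) * cyclotomic q ℤ := by
  have h3 : Nat.Prime 3 := by norm_num
  have hne3q : ¬ (3:ℕ) ∣ q := fun h => by
    rcases (Nat.prime_dvd_prime_iff_eq h3 hq).mp h; omega
  have hne3r : ¬ (3:ℕ) ∣ r := fun h => by
    rcases (Nat.prime_dvd_prime_iff_eq h3 hr).mp h; omega
  have hneqr : ¬ r ∣ q := fun h => by
    rcases (Nat.prime_dvd_prime_iff_eq hr hq).mp h; omega
  have h1 : expand ℤ 3 (cyclotomic (q*r) ℤ) = cyclotomic (q*r*3) ℤ * cyclotomic (q*r) ℤ :=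
    cyclotomic_expand_eq_cyclotomic_mul h3 (fun h => ((Nat.Prime.dvd_mul h3).mp h).elim hne3q hne3r) ℤ
  have h2 : expand ℤ r (cyclotomic q ℤ) = cyclotomic (q*r) ℤ * cyclotomic q ℤ :=
    cyclotomic_expand_eq_cyclotomic_mul hr hneqr ℤ
  have h4 : expand ℤ (3*r) (cyclotomic q ℤ)
      = (cyclotomic (q*r*3) ℤ * cyclotomic (q*r) ℤ) * expand ℤ 3 (cyclotomic q ℤ) := by
    rw [← expand_expand, h2, map_mul, h1]
  have h5 : q*r*3 = 3*q*r := by ring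
  rw [h4, h2, h5]
  ring

lemma geom_pow (t n : ℕ) : (∑ i ∈ range n, (X:ℤ[X])^(t*i)) * (X^t - 1) = X^(t*n) - 1 := by
  have := geom_sum_mul ((X:ℤ[X])^t) n
  simpa [← pow_mul] using this

noncomputable def Vpoly (q r : ℕ) : ℤ[X] :=
  ∑ p ∈ range 3 ×ˢ (range r ×ˢ range q), X^(p.1 + 3*q*p.2.1 + 3*r*p.2.2)

lemma Vcoeff (q r m : ℕ) : (Vpoly q r).coeff m =
    ((range 3 ×ˢ (range r ×ˢ range q)).filter
      (fun p => p.1 + 3*q*p.2.1 + 3*r*p.2.2 = m)).card := by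
  rw [Vpoly, finset_sum_coeff]
  rw [← Finset.sum_boole]
  refine Finset.sum_congr rfl fun p _ => ?_
  rw [coeff_X_pow]
  simp [eq_comm]

lemma inj_aux {q r l l' j j' : ℕ} (hr : r.Prime) (hqlt : q < r) (hq0 : 0 < q)
    (hl' : l' < r) (hle : l ≤ l') (heq : q*l + r*j = q*l' + r*j') : l = l' ∧ j = j' := by
  obtain ⟨u, rfl⟩ : ∃ u, l' = l + u := ⟨l' - l, by omega⟩
  have h1 : r*j = q*u + r*j' := by
    have : q*l + r*j = q*l + (q*u + r*j') := by rw [heq]; ring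
    omega
  have hj' : j' ≤ j := by
    by_contra h
    have : r*j < r*j' := (Nat.mul_lt_mul_left hr.pos).mpr (by omega)
    omega
  obtain ⟨v, rfl⟩ : ∃ v, j = j' + v := ⟨j - j', by omega⟩
  have h2 : r*v = q*u := by
    have : r*j' + r*v = q*u + r*j' := by rw [← h1]; ring
    omega
  have hrdvd : r ∣ q*u := ⟨v, by omega⟩
  have hru : r ∣ u := by
    rcases (Nat.Prime.dvd_mul hr).mp hrdvd with h | h
    · exact absurd (Nat.le_of_dvd hq0 h) (by omega)
    · exact h
  have hu : u = 0 := by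
    rcases Nat.eq_zero_or_pos u with h | h
    · exact h
    · exact absurd (Nat.le_of_dvd h hru) (by omega)
  subst hu
  have : v = 0 := by
    have := h2
    simp at this ⊢
    omega
  omega

lemma inj_core {q r : ℕ} (hr : r.Prime) (hqlt : q < r) (hq0 : 0 < q)
    {e e' l l' j j' : ℕ} (he : e < 3) (he' : e' < 3) (hl : l < r) (hl' : l' < r)
    (heq : e + 3*q*l + 3*r*j = e' + 3*q*l' + 3*r*j') : e = e' ∧ l = l' ∧ j = j' := by
  have key : e + 3*(q*l + r*j) = e' + 3*(q*l' + r*j') := by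
    have h1 : 3*(q*l + r*j) = 3*q*l + 3*r*j := by ring
    have h2 : 3*(q*l' + r*j') = 3*q*l' + 3*r*j' := by ring
    omega
  have hee : e = e' ∧ q*l + r*j = q*l' + r*j' := by
    set a := q*l + r*j; set b := q*l' + r*j'
    omega
  obtain ⟨he2, heq2⟩ := hee
  rcases Nat.le_total l l' with h | h
  · obtain ⟨h1, h2⟩ := inj_aux hr hqlt hq0 hl' h heq2
    exact ⟨he2, h1, h2⟩
  · obtain ⟨h1, h2⟩ := inj_aux hr hqlt hq0 hl h heq2.symm
    exact ⟨he2, h1.symm, h2.symm⟩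

lemma Vcoeff_le_one {q r : ℕ} (hr : r.Prime) (hqlt : q < r) (hq0 : 0 < q) (m : ℕ) :
    (Vpoly q r).coeff m ≤ 1 := by
  rw [Vcoeff]
  norm_cast
  rw [Finset.card_le_one]
  rintro ⟨e, l, j⟩ h1 ⟨e', l', j'⟩ h2
  simp only [Finset.mem_filter, Finset.mem_product, Finset.mem_range] at h1 h2
  obtain ⟨⟨he, hl, hj⟩, hm⟩ := h1
  obtain ⟨⟨he', hl', hj'⟩, hm'⟩ := h2
  obtain ⟨a, b, c⟩ := inj_core hr hqlt hq0 he he' hl hl' (hm.trans hm'.symm)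
  simp [a, b, c]

lemma Vcoeff_nonneg (q r m : ℕ) : 0 ≤ (Vpoly q r).coeff m := by
  rw [Vcoeff]; positivity

lemma Vcoeff_eq_one {q r : ℕ} (hr : r.Prime) (hqlt : q < r) (hq0 : 0 < q) {m : ℕ}
    (e l j : ℕ) (he : e < 3) (hl : l < r) (hj : j < q)
    (hm : e + 3*q*l + 3*r*j = m) : (Vpoly q r).coeff m = 1 := by
  refine le_antisymm (Vcoeff_le_one hr hqlt hq0 m) ?_
  rw [Vcoeff]
  norm_cast
  rw [Nat.succ_le_iff, Finset.card_pos]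
  exact ⟨(e, l, j), by simp [Finset.mem_filter, he, hl, hj, hm]⟩

lemma Vcoeff_eq_zero {q r : ℕ} {m : ℕ}
    (h : ∀ e l j : ℕ, e < 3 → l < r → j < q → e + 3*q*l + 3*r*j ≠ m) :
    (Vpoly q r).coeff m = 0 := by
  rw [Vcoeff]
  norm_cast
  rw [Finset.card_eq_zero, Finset.filter_eq_empty_iff]
  rintro ⟨e, l, j⟩ hp
  simp only [Finset.mem_product, Finset.mem_range] at hp
  exact h e l j hp.1 hp.2.1 hp.2.2

lemma Vpoly_eq (q r : ℕ) :
    (1 + X + X^2) * ((∑ l ∈ range r, (X:ℤ[X])^(3*q*l)) * (∑ j ∈ range q, X^(3*r*j)))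
      = Vpoly q r := by
  have h3 : (1 + X + X^2 : ℤ[X]) = ∑ e ∈ range 3, X^e := by
    rw [Finset.sum_range_succ, Finset.sum_range_succ, Finset.sum_range_one]
    ring
  have hab : (∑ l ∈ range r, (X:ℤ[X])^(3*q*l)) * (∑ j ∈ range q, X^(3*r*j))
      = ∑ l ∈ range r, ∑ j ∈ range q, X^(3*q*l + 3*r*j) := by
    rw [Finset.sum_mul_sum]
    exact Finset.sum_congr rfl fun l _ => Finset.sum_congr rfl fun j _ => (pow_add X _ _).symm
  rw [h3, hab, Vpoly, Finset.sum_product, Finset.sum_mul]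
  refine Finset.sum_congr rfl fun e _ => ?_
  rw [Finset.mul_sum, Finset.sum_product]
  refine Finset.sum_congr rfl fun l _ => ?_
  rw [Finset.mul_sum]
  refine Finset.sum_congr rfl fun j _ => ?_
  show (X:ℤ[X])^e * X^(3*q*l+3*r*j) = X^(e + 3*q*l + 3*r*j)
  rw [← pow_add]
  congr 1
  omega

lemma keyB (q r : ℕ) (hq : q.Prime) (hr : r.Prime) (hq3 : 3 < q) (hqr : q < r) :
    cyclotomic (3*q*r) ℤ * ((X^(q*r) - 1) * (X^(3*q*r) - 1))
      = (X^q - 1) * ((X^r - 1) * Vpoly q r) := by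
  haveI : Fact q.Prime := ⟨hq⟩
  have ecp : ∀ t : ℕ, expand ℤ t (cyclotomic q ℤ) = ∑ i ∈ range q, (X:ℤ[X])^(t*i) :=
    fun t => expand_cyc_prime q t hq
  have hq1 : cyclotomic q ℤ = ∑ i ∈ range q, (X:ℤ[X])^i := cyclotomic_prime ℤ q
  have A : cyclotomic (3*q*r) ℤ * ((∑ i ∈ range q, (X:ℤ[X])^(r*i)) * (∑ i ∈ range q, (X:ℤ[X])^(3*i)))
      = (∑ j ∈ range q, (X:ℤ[X])^(3*r*j)) * (∑ i ∈ range q, (X:ℤ[X])^i) := by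
    rw [← ecp r, ← ecp 3, ← ecp (3*r), ← hq1]; exact keyA q r hq hr hq3 hqr
  have E1 : (∑ i ∈ range q, (X:ℤ[X])^(r*i)) * (X^r - 1) = X^(q*r) - 1 := by
    rw [geom_pow r q, mul_comm r q]
  have E2 : (∑ i ∈ range q, (X:ℤ[X])^(3*i)) * (X^3 - 1) = X^(3*q) - 1 := geom_pow 3 q
  have E3 : (∑ l ∈ range r, (X:ℤ[X])^(3*q*l)) * (X^(3*q) - 1) = X^(3*q*r) - 1 := geom_pow (3*q) r
  have E4 : (∑ i ∈ range q, (X:ℤ[X])^i) * (X - 1) = X^q - 1 := by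
    have := geom_sum_mul (X:ℤ[X]) q; simpa using this
  rw [← Vpoly_eq]
  linear_combination ((X^r-1)*(X^3-1)*(∑ l ∈ range r, (X:ℤ[X])^(3*q*l))) * A
    - (cyclotomic (3*q*r) ℤ*(∑ i ∈ range q, (X:ℤ[X])^(3*i))*(X^3-1)*(∑ l ∈ range r, (X:ℤ[X])^(3*q*l))) * E1
    - (cyclotomic (3*q*r) ℤ*(X^(q*r)-1)*(∑ l ∈ range r, (X:ℤ[X])^(3*q*l))) * E2
    - (cyclotomic (3*q*r) ℤ*(X^(q*r)-1)) * E3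
    + ((∑ j ∈ range q, (X:ℤ[X])^(3*r*j))*(X^r-1)*(∑ l ∈ range r, (X:ℤ[X])^(3*q*l))*(1+X+X^2)) * E4

lemma coeff_of_identity {f g : ℤ[X]} {N M : ℕ} (hNM : N ≤ M)
    (h : f * ((X^N - 1) * (X^M - 1)) = g) {k : ℕ} (hk : k < N) :
    f.coeff k = g.coeff k := by
  have hg : g = f * X^(N+M) - f * X^N - f * X^M + f := by
    rw [← h, pow_add]; ring
  rw [hg, coeff_add, coeff_sub, coeff_sub, coeff_mul_X_pow', coeff_mul_X_pow',
    coeff_mul_X_pow', if_neg (by omega), if_neg (by omega), if_neg (by omega)]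
  ring

lemma coeff_sub_one_mul (s : ℕ) (g : ℤ[X]) (k : ℕ) :
    ((X^s - 1) * g).coeff k = (if s ≤ k then g.coeff (k - s) else 0) - g.coeff k := by
  rw [sub_mul, one_mul, coeff_sub, mul_comm, coeff_mul_X_pow']

lemma bound_lt {q r : ℕ} (hq : q.Prime) (hr : r.Prime) (hq3 : 3 < q) (hqr : q < r)
    {k : ℕ} (hk : k < q*r) : |(cyclotomic (3*q*r) ℤ).coeff k| ≤ 2 := by
  have hNM : q*r ≤ 3*q*r := by nlinarith [hq.pos, hr.pos]
  have hco := coeff_of_identity hNM (keyB q r hq hr hq3 hqr) hk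
  rw [hco]
  simp only [coeff_sub_one_mul]
  have h1 : ∀ m, 0 ≤ (Vpoly q r).coeff m := Vcoeff_nonneg q r
  have h2 : ∀ m, (Vpoly q r).coeff m ≤ 1 := fun m => Vcoeff_le_one hr hqr hq.pos m
  rw [abs_le]
  constructor <;>
  · split_ifs <;>
      linarith [h1 k, h2 k, h1 (k-q), h2 (k-q), h1 (k-r), h2 (k-r), h1 (k-q-r), h2 (k-q-r)]

end Aux

section Rev

lemma St_coeff (t q n : ℕ) (ht : 0 < t) :
    (∑ i ∈ range q, (X:ℤ[X])^(t*i)).coeff n = if t ∣ n ∧ n < t*q then 1 else 0 := by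
  rw [finset_sum_coeff]
  simp only [coeff_X_pow]
  by_cases h : t ∣ n ∧ n < t*q
  · obtain ⟨⟨c, rfl⟩, hlt⟩ := h
    rw [if_pos ⟨⟨c, rfl⟩, hlt⟩, Finset.sum_eq_single c]
    · simp
    · intro i _ hne
      rw [if_neg]
      intro hh
      exact hne (Nat.eq_of_mul_eq_mul_left ht hh.symm)
    · intro hc
      exfalso
      apply hc
      rw [Finset.mem_range]
      exact lt_of_mul_lt_mul_left hlt (Nat.zero_le t)
  · rw [if_neg h]
    apply Finset.sum_eq_zero
    intro i hi
    rw [if_neg]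
    intro hh
    apply h
    subst hh
    exact ⟨⟨i, rfl⟩, by
      rw [Finset.mem_range] at hi
      exact (Nat.mul_lt_mul_left ht).mpr hi⟩

lemma St_ne_zero (t q : ℕ) (ht : 0 < t) (hq : 0 < q) :
    (∑ i ∈ range q, (X:ℤ[X])^(t*i)) ≠ 0 := by
  intro h0
  have h1 : (∑ i ∈ range q, (X:ℤ[X])^(t*i)).coeff 0 = 1 := by
    rw [St_coeff t q 0 ht, if_pos ⟨Dvd.intro 0 rfl, by positivity⟩]
  rw [h0] at h1
  simp at h1

lemma St_natDegree (t q : ℕ) (hq : q.Prime) :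
    (∑ i ∈ range q, (X:ℤ[X])^(t*i)).natDegree = (q-1)*t := by
  rw [← expand_cyc_prime q t hq, natDegree_expand, natDegree_cyclotomic,
    Nat.totient_prime hq]

lemma St_reverse (t q : ℕ) (ht : 0 < t) (hq : q.Prime) :
    (∑ i ∈ range q, (X:ℤ[X])^(t*i)).reverse = ∑ i ∈ range q, (X:ℤ[X])^(t*i) := by
  have hdeg := St_natDegree t q hq
  have hq1 : 1 ≤ q := hq.one_lt.le
  have hdn : t*(q-1) < t*q := (Nat.mul_lt_mul_left ht).mpr (by omega)
  ext n
  rw [coeff_reverse, hdeg]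
  by_cases hn : n ≤ (q-1)*t
  · rw [revAt_le hn, St_coeff t q _ ht, St_coeff t q _ ht]
    have hNt : t ∣ (q-1)*t := Dvd.intro (q-1) (mul_comm t (q-1))
    have hqt : (q-1)*t = t*(q-1) := mul_comm _ _
    by_cases hd : t ∣ n
    · rw [if_pos ⟨Nat.dvd_sub hNt hd, by omega⟩, if_pos ⟨hd, by omega⟩]
    · rw [if_neg, if_neg]
      · exact fun hh => hd hh.1
      · rintro ⟨hdd, -⟩
        apply hd
        have := Nat.dvd_sub hNt hdd
        rwa [Nat.sub_sub_self hn] at this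
  · rw [revAt_eq_self_of_lt (by omega)]

lemma cycl_reverse (q r : ℕ) (hq : q.Prime) (hr : r.Prime) (hq3 : 3 < q) (hqr : q < r) :
    (cyclotomic (3*q*r) ℤ).reverse = cyclotomic (3*q*r) ℤ := by
  have A := keyA q r hq hr hq3 hqr
  rw [expand_cyc_prime q r hq, expand_cyc_prime q 3 hq, expand_cyc_prime q (3*r) hq] at A
  have hq1 : cyclotomic q ℤ = ∑ i ∈ range q, (X:ℤ[X])^(1*i) := by
    haveI : Fact q.Prime := ⟨hq⟩
    rw [cyclotomic_prime]
    exact Finset.sum_congr rfl fun i _ => by rw [one_mul]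
  rw [hq1] at A
  have hrev := congrArg Polynomial.reverse A
  simp only [reverse_mul_of_domain] at hrev
  rw [St_reverse r q (by omega) hq, St_reverse 3 q (by norm_num) hq,
    St_reverse (3*r) q (by omega) hq, St_reverse 1 q one_pos hq] at hrev
  have hcancel : (∑ i ∈ range q, (X:ℤ[X])^(r*i)) * (∑ i ∈ range q, (X:ℤ[X])^(3*i)) ≠ 0 :=
    mul_ne_zero (St_ne_zero r q (by omega) hq.pos) (St_ne_zero 3 q (by norm_num) hq.pos)
  have := hrev.trans A.symm
  rw [← mul_assoc, ← mul_assoc] at this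
  exact mul_right_cancel₀ (St_ne_zero r q (by omega) hq.pos)
    (mul_right_cancel₀ (St_ne_zero 3 q (by norm_num) hq.pos) this)

lemma cycl_natDegree (q r : ℕ) (hq : q.Prime) (hr : r.Prime) (hq3 : 3 < q) (hqr : q < r) :
    (cyclotomic (3*q*r) ℤ).natDegree = 2*((q-1)*(r-1)) := by
  have c3q : Nat.Coprime 3 q := (Nat.coprime_primes (by norm_num) hq).mpr (by omega)
  have c3r : Nat.Coprime 3 r := (Nat.coprime_primes (by norm_num) hr).mpr (by omega)
  have cqr : Nat.Coprime q r := (Nat.coprime_primes hq hr).mpr (by omega)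
  rw [natDegree_cyclotomic, Nat.totient_mul (Nat.Coprime.mul c3r cqr),
    Nat.totient_mul c3q, Nat.totient_prime hq, Nat.totient_prime hr,
    Nat.totient_prime (by norm_num : Nat.Prime 3)]
  ring

lemma bound_all {q r : ℕ} (hq : q.Prime) (hr : r.Prime) (hq3 : 3 < q) (hqr : q < r)
    (k : ℕ) : |(cyclotomic (3*q*r) ℤ).coeff k| ≤ 2 := by
  by_cases hk : k < q*r
  · exact bound_lt hq hr hq3 hqr hk
  · push_neg at hk
    set D := (cyclotomic (3*q*r) ℤ).natDegree with hD
    by_cases hk2 : D < k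
    · rw [coeff_eq_zero_of_natDegree_lt hk2]
      norm_num
    · push_neg at hk2
      have hDval : D = 2*((q-1)*(r-1)) := cycl_natDegree q r hq hr hq3 hqr
      have hsym : (cyclotomic (3*q*r) ℤ).coeff k = (cyclotomic (3*q*r) ℤ).coeff (D - k) := by
        conv_lhs => rw [← cycl_reverse q r hq hr hq3 hqr]
        rw [coeff_reverse, ← hD, revAt_le hk2]
      rw [hsym]
      apply bound_lt hq hr hq3 hqr
      have hlt : (q-1)*(r-1) < q*r := Nat.mul_lt_mul_of_lt_of_le (by omega) (by omega) (by omega)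
      omega

end Rev

lemma exists_two (q : ℕ) (hq : q.Prime) (hq3 : 3 < q) :
    ∃ r k : ℕ, r.Prime ∧ q < r ∧ |(cyclotomic (3*q*r) ℤ).coeff k| = 2 := by
  have h3p : Nat.Prime 3 := by norm_num
  have hq5 : 5 ≤ q := by
    have h4 : q ≠ 4 := fun h => by rw [h] at hq; norm_num at hq
    omega
  have hq3m : q % 3 = 1 ∨ q % 3 = 2 := by
    have : ¬ (3:ℕ) ∣ q := fun h => by rcases (Nat.prime_dvd_prime_iff_eq h3p hq).mp h; omega
    omega
  obtain ⟨t, ht12, hco3⟩ : ∃ t, (t = 1 ∨ t = 2) ∧ ¬ (3:ℕ) ∣ (2*q + t) := by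
    rcases hq3m with h|h
    · exact ⟨2, Or.inr rfl, by omega⟩
    · exact ⟨1, Or.inl rfl, by omega⟩
  have hcoq : ¬ q ∣ (2*q + t) := by
    intro h
    have h2 : q ∣ t := (Nat.dvd_add_right ⟨2, by ring⟩).mp h
    have := Nat.le_of_dvd (by omega) h2
    omega
  have hcop : Nat.Coprime (2*q + t) (3*q) := by
    refine Nat.Coprime.mul_right ?_ ?_
    · exact Nat.coprime_comm.mp (h3p.coprime_iff_not_dvd.mpr hco3)
    · exact Nat.coprime_comm.mp (hq.coprime_iff_not_dvd.mpr hcoq)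
  haveI : NeZero (3*q) := ⟨by positivity⟩
  have hunit : IsUnit ((2*q+t : ℕ) : ZMod (3*q)) := (ZMod.isUnit_iff_coprime _ _).mpr hcop
  obtain ⟨r, hrq, hrp, hrmod⟩ := Nat.forall_exists_prime_gt_and_eq_mod hunit q
  have hmod : r % (3*q) = 2*q + t := by
    have h := (ZMod.natCast_eq_natCast_iff r (2*q+t) (3*q)).mp hrmod
    have h2 : (2*q+t) % (3*q) = 2*q+t := Nat.mod_eq_of_lt (by omega)
    unfold Nat.ModEq at h
    exact h.trans h2
  have hqr : q < r := hrq
  refine ⟨r, q + r, hrp, hrq, ?_⟩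
  have hk : q + r < q*r := by
    have h5 : 5*r ≤ q*r := Nat.mul_le_mul_right r (by omega)
    omega
  have hNM : q*r ≤ 3*q*r := by nlinarith [hq.pos, hrp.pos]
  have hco := coeff_of_identity hNM (keyB q r hq hrp hq3 hqr) hk
  rw [hco]
  simp only [coeff_sub_one_mul]
  rw [show q + r - q = r from by omega, show r - r = 0 from by omega,
      show q + r - r = q from by omega]
  have v0 : (Vpoly q r).coeff 0 = 1 :=
    Vcoeff_eq_one hrp hqr hq.pos 0 0 0 (by norm_num) hrp.pos hq.pos (by ring)
  have vk : (Vpoly q r).coeff (q+r) = 1 := by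
    have hdm := Nat.div_add_mod r (3*q)
    set s0 := r / (3*q) with hs0
    have hr_eq : r = 3*q*s0 + (2*q + t) := by omega
    have hs0q : s0 ≤ q*s0 := Nat.le_mul_of_pos_left s0 (by omega)
    have h3qs : 3*q*s0 = 3*(q*s0) := by ring
    refine Vcoeff_eq_one hrp hqr hq.pos t (s0+1) 0 (by omega) (by omega) hq.pos ?_
    have h2 : 3*q*(s0+1) = 3*q*s0 + 3*q := by ring
    omega
  have vq : (Vpoly q r).coeff q = 0 := by
    apply Vcoeff_eq_zero
    intro e l j he hl hj heq
    rcases Nat.eq_zero_or_pos j with hj0 | hj0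
    · subst hj0
      rcases Nat.eq_zero_or_pos l with hl0 | hl0
      · subst hl0; simp at heq; omega
      · have h1 : 3*q ≤ 3*q*l := Nat.le_mul_of_pos_right (3*q) hl0
        omega
    · have h1 : 3*r ≤ 3*r*j := Nat.le_mul_of_pos_right (3*r) hj0
      omega
  have vr : (Vpoly q r).coeff r = 0 := by
    apply Vcoeff_eq_zero
    intro e l j he hl hj heq
    rcases Nat.eq_zero_or_pos j with hj0 | hj0
    · subst hj0
      have heq2 : e + 3*q*l = r := by omega
      have hm : r % (3*q) = e % (3*q) := by
        rw [← heq2, show e + 3*q*l = e + (3*q)*l from by ring, Nat.add_mul_mod_self_left]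
      have he2 : e % (3*q) = e := Nat.mod_eq_of_lt (by omega)
      omega
    · have h1 : 3*r ≤ 3*r*j := Nat.le_mul_of_pos_right (3*r) hj0
      omega
  rw [if_pos (by omega : q ≤ q + r), if_pos (le_refl r), if_pos (by omega : r ≤ q + r),
    v0, vq, vr, vk]
  norm_num

end Stmt3Aux

/-- for any prime `q > 3` we have `M(3;q) = 2`. -/
theorem stmt3 (q : ℕ) (hq : q.Prime) (hq3 : 3 < q) :
    (∀ r k : ℕ, r.Prime → q < r → |cyclCoeff (3 * q * r) k| ≤ 2) ∧
      ∃ r k : ℕ, r.Prime ∧ q < r ∧ |cyclCoeff (3 * q * r) k| = 2 := by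
  constructor
  · intro r k hr hqr
    exact Stmt3Aux.bound_all hq hr hq3 hqr k
  · exact Stmt3Aux.exists_two q hq hq3
end

section
/- Let 2 < p < q < r be primes and let k ≥ 0 be an integer. For an integer m, let f_k(m) denote the unique integer with 0 ≤ f_k(m) < pq and r·f_k(m) ≡ k - m (mod pq). Then ∑_{m=0}^{p-1} a_{pq}(f_k(m)) = ∑_{m=0}^{p-1} a_{pq}(f_k(m+q)). -/
/-!
Put `N = pq` and `u = r⁻¹ ∈ ℤ/N`, so that `F m` is the representative of `u (k - m)`.
Reducing exponents modulo `N` maps `ℤ[X]` onto the group ring `ℤ[ℤ/N]`; since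
`deg Φ_N < N`, the image `B` of `Φ_N` has the coefficients `a_N(t)`, and `X^d` with `d ≡ u`
maps to `y = [u]`. The two sums are the coefficients of `B (1 + y + ⋯ + y^(p-1))` at `uk` and
at `uk - qu`, so it suffices that `B (1 + ⋯ + y^(p-1)) (1 - y^q) = 0`. Lifted to `ℤ[X]`, this says
that `X^N - 1 = (X^p - 1) Φ_q(X) Φ_N(X)` divides
`Φ_N(X) (1 + ⋯ + X^((p-1)d)) (1 - X^(qd)) = Φ_N(X) (1 - X^(pd)) Φ_q(X^d)`,
which holds because `Φ_q(X) ∣ Φ_q(X^d)` when `d` is prime to `q`.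
-/

open Polynomial

open Finset AddMonoidAlgebra

namespace Polynomial

variable (R : Type*) [CommRing R]

theorem cyclotomic_dvd_expand_cyclotomic {n d : ℕ} (hd : d.Coprime n) :
    cyclotomic n R ∣ expand R d (cyclotomic n R) := by
  induction d using induction_on_primes with
  | zero =>
    rw [Nat.coprime_zero_left] at hd
    simp [hd]
  | one => simp
  | prime_mul p a hp ih =>
    have hpn : ¬p ∣ n := (hp.coprime_iff_not_dvd).mp (Nat.Coprime.coprime_mul_right hd)
    rw [expand_mul]
    calc cyclotomic n R ∣ expand R p (cyclotomic n R) :=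
          Dvd.intro_left _ (cyclotomic_expand_eq_cyclotomic_mul hp hpn R).symm
      _ ∣ expand R p (expand R a (cyclotomic n R)) :=
          _root_.map_dvd (expand R p) (ih (Nat.Coprime.coprime_mul_left hd))

theorem X_pow_mul_sub_one_eq_mul_cyclotomic {p q : ℕ} (hp : p.Prime) (hq : q.Prime)
    (hpq : p ≠ q) :
    (X ^ (p * q) - 1 : R[X]) = (X ^ p - 1) * cyclotomic q R * cyclotomic (p * q) R := by
  have := Fact.mk hq
  have hpq' : ¬p ∣ q := fun h => hpq ((Nat.prime_dvd_prime_iff_eq hp hq).mp h)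
  have h := congrArg (expand R p) (cyclotomic_prime_mul_X_sub_one R q)
  simp only [map_mul, map_sub, map_pow, map_one, expand_X,
    cyclotomic_expand_eq_cyclotomic_mul hp hpq'] at h
  rw [← pow_mul, mul_comm q p] at h
  rw [← h]
  ring

theorem X_pow_mul_sub_one_dvd_cyclotomic_mul {p q d : ℕ} (hp : p.Prime) (hq : q.Prime)
    (hpq : p ≠ q) (hd : d.Coprime q) :
    (X ^ (p * q) - 1 : R[X]) ∣
      cyclotomic (p * q) R * (∑ m ∈ range p, (X ^ d) ^ m) * (1 - (X ^ d) ^ q) := by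
  have := Fact.mk hq
  set y : R[X] := X ^ d
  have hexpand : expand R d (cyclotomic q R) = ∑ j ∈ range q, y ^ j := by
    simp [cyclotomic_prime, y]
  have hgeom : (∑ m ∈ range p, y ^ m) * (1 - y ^ q) = (1 - y ^ p) * ∑ j ∈ range q, y ^ j := by
    linear_combination (∑ m ∈ range p, y ^ m) * geom_sum_mul y q -
      (∑ j ∈ range q, y ^ j) * geom_sum_mul y p
  have hXp : (X ^ p - 1 : R[X]) ∣ 1 - y ^ p := by
    rw [← neg_sub (y ^ p)]
    refine Dvd.dvd.neg_right ?_
    simpa [y, ← pow_mul, mul_comm] using sub_dvd_pow_sub_pow (X ^ p : R[X]) 1 d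
  rw [X_pow_mul_sub_one_eq_mul_cyclotomic R hp hq hpq, mul_assoc (cyclotomic _ _), hgeom,
    ← hexpand]
  calc (X ^ p - 1) * cyclotomic q R * cyclotomic (p * q) R
      ∣ (1 - y ^ p) * expand R d (cyclotomic q R) * cyclotomic (p * q) R :=
        mul_dvd_mul (mul_dvd_mul hXp (cyclotomic_dvd_expand_cyclotomic R hd)) dvd_rfl
    _ = _ := by ring

noncomputable def foldZMod (N : ℕ) : R[X] →ₐ[R] R[ZMod N] :=
  aeval (single 1 1)

variable {R}

theorem foldZMod_monomial (N n : ℕ) (c : R) :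
    foldZMod R N (monomial n c) = single (n : ZMod N) c := by
  simp [foldZMod, ← C_mul_X_pow_eq_monomial, AddMonoidAlgebra.single_pow]

theorem foldZMod_X_pow (N n : ℕ) : foldZMod R N (X ^ n) = single (n : ZMod N) 1 := by
  rw [← monomial_one_right_eq_X_pow, foldZMod_monomial]

theorem foldZMod_eq_zero_of_dvd {N : ℕ} {f : R[X]} (h : X ^ N - 1 ∣ f) :
    foldZMod R N f = 0 := by
  obtain ⟨g, rfl⟩ := h
  simp [foldZMod_X_pow, one_def]

theorem coeff_foldZMod_of_natDegree_lt {N : ℕ} [NeZero N] {f : R[X]} (hf : f.natDegree < N)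
    (t : ZMod N) : (foldZMod R N f).coeff t = f.coeff t.val := by
  conv_lhs => rw [as_sum_range' f N hf]
  rw [map_sum, AddMonoidAlgebra.coeff_sum, Finset.sum_apply',
    Finset.sum_eq_single_of_mem t.val (mem_range.mpr t.val_lt)]
  · simp [foldZMod_monomial]
  · intro i hi hne
    rw [foldZMod_monomial, coeff_single, Finsupp.single_apply, if_neg]
    rintro rfl
    exact hne (ZMod.val_cast_of_lt (mem_range.mp hi)).symm

end Polynomial

namespace AddMonoidAlgebra

variable {R G : Type*} [CommRing R] [AddCommGroup G]

theorem coeff_mul_sum_single_pow (B : R[G]) (a s : G) (n : ℕ) :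
    (B * ∑ m ∈ range n, single a (1 : R) ^ m).coeff s = ∑ m ∈ range n, B.coeff (s - m • a) := by
  simp [Finset.mul_sum, coeff_sum, Finset.sum_apply', single_pow, sub_eq_add_neg]

theorem sum_coeff_sub_nsmul_eq_of_mul_eq_zero {B : R[G]} {a : G} {n q : ℕ}
    (h : B * (∑ m ∈ range n, single a (1 : R) ^ m) * (1 - single a 1 ^ q) = 0) (s : G) :
    ∑ m ∈ range n, B.coeff (s - m • a) = ∑ m ∈ range n, B.coeff (s - q • a - m • a) := by
  rw [mul_sub, mul_one, sub_eq_zero] at h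
  calc ∑ m ∈ range n, B.coeff (s - m • a)
      = (B * ∑ m ∈ range n, single a 1 ^ m).coeff s := (coeff_mul_sum_single_pow B a s n).symm
    _ = (B * (∑ m ∈ range n, single a 1 ^ m) * single a 1 ^ q).coeff s := by rw [← h]
    _ = ∑ m ∈ range n, B.coeff (s - q • a - m • a) := by
        rw [single_pow, one_pow, coeff_mul_single_apply, mul_one, coeff_mul_sum_single_pow,
          ← sub_eq_add_neg]

end AddMonoidAlgebra

theorem ZMod.eq_val_inv_mul_of_mul_modEq {N r x : ℕ} {c : ℤ} (hr : r.Coprime N) (hx : x < N)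
    (h : (r : ℤ) * x ≡ c [ZMOD N]) : x = ((r : ZMod N)⁻¹ * c).val := by
  have h' : (r : ZMod N) * x = c := by
    simpa using (ZMod.intCast_eq_intCast_iff _ _ _).mpr h
  rw [← h', ← mul_assoc, ZMod.inv_mul_of_unit _ ((ZMod.isUnit_iff_coprime r N).mpr hr),
    one_mul, ZMod.val_cast_of_lt hx]

theorem stmt4_general (p q r : ℕ) (hp : p.Prime) (hq : q.Prime) (hr : r.Prime)
    (hpq : p < q) (hqr : q < r) (k : ℕ) (F : ℕ → ℕ)
    (hFlt : ∀ m : ℕ, F m < p * q)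
    (hFcong : ∀ m : ℕ, (r : ℤ) * (F m : ℤ) ≡ (k : ℤ) - (m : ℤ) [ZMOD (p * q : ℕ)]) :
    ∑ m ∈ Finset.range p, cyclCoeff (p * q) (F m) =
      ∑ m ∈ Finset.range p, cyclCoeff (p * q) (F (m + q)) := by
  have hN : 1 < p * q := one_lt_mul_of_lt_of_le hp.one_lt hq.one_le
  have := NeZero.of_pos (zero_lt_one.trans hN)
  have hr : r.Coprime (p * q) :=
    Nat.Coprime.mul_right ((Nat.coprime_primes hr hp).mpr (hpq.trans hqr).ne')
      ((Nat.coprime_primes hr hq).mpr hqr.ne')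
  set u : ZMod (p * q) := (r : ZMod (p * q))⁻¹
  have hu : u.val.Coprime q := by
    have hunit : IsUnit (u.val : ZMod (p * q)) :=
      IsUnit.of_mul_eq_one (r : ZMod (p * q)) (ZMod.val_inv_mul hr)
    exact ((ZMod.isUnit_iff_coprime _ _).mp hunit).coprime_mul_left_right
  set B := foldZMod ℤ (p * q) (cyclotomic (p * q) ℤ)
  have hdeg : (cyclotomic (p * q) ℤ).natDegree < p * q := by
    rw [natDegree_cyclotomic]
    exact Nat.totient_lt _ hN
  have hB (t : ZMod (p * q)) : cyclCoeff (p * q) t.val = B.coeff t :=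
    (coeff_foldZMod_of_natDegree_lt hdeg t).symm
  have hvanish : B * (∑ m ∈ range p, single u 1 ^ m) * (1 - single u 1 ^ q) = 0 := by
    simpa [foldZMod_X_pow] using
      foldZMod_eq_zero_of_dvd (X_pow_mul_sub_one_dvd_cyclotomic_mul ℤ hp hq hpq.ne hu)
  have hF (m : ℕ) : cyclCoeff (p * q) (F m) = B.coeff (u * (k - m)) := by
    rw [ZMod.eq_val_inv_mul_of_mul_modEq hr (hFlt m) (hFcong m), hB]
    push_cast
    rfl
  simp only [hF]
  convert sum_coeff_sub_nsmul_eq_of_mul_eq_zero hvanish (u * k) using 2 with m - m <;>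
    · congr 1
      push_cast
      simp only [nsmul_eq_mul]
      ring

/-- with `F m` the unique integer with `0 ≤ F m < pq` and
`r·F m ≡ k - m (mod pq)`, one has
`∑_{m=0}^{p-1} a_{pq}(F m) = ∑_{m=0}^{p-1} a_{pq}(F (m+q))`. -/
theorem stmt4 (p q r : ℕ) (hp : p.Prime) (hq : q.Prime) (hr : r.Prime)
    (h2p : 2 < p) (hpq : p < q) (hqr : q < r) (k : ℕ) (F : ℕ → ℕ)
    (hFlt : ∀ m : ℕ, F m < p * q)
    (hFcong : ∀ m : ℕ, (r : ℤ) * (F m : ℤ) ≡ (k : ℤ) - (m : ℤ) [ZMOD (p * q : ℕ)]) :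
    ∑ m ∈ Finset.range p, cyclCoeff (p * q) (F m) =
      ∑ m ∈ Finset.range p, cyclCoeff (p * q) (F (m + q)) :=
  stmt4_general p q r hp hq hr hpq hqr k F hFlt hFcong
end

section
/- Let p < q < r be primes satisfying p > 3, q ≡ 2 (mod p), r ≡ (p-1)/2 (mod p) and r ≡ (q-1)/2 (mod q). Then for k = (p-1)(qr+1)/2 one has a_{pqr}(k) = (p+1)/2. -/
/-!
Clearing denominators in `Φ_{pqr} = (1 - X^{pqr})(1 - X^p)(1 - X^q)(1 - X^r) /
((1 - X)(1 - X^{pq})(1 - X^{pr})(1 - X^{qr}))` with geometric sums gives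
`Φ_{pqr} · (X^{pqr} - 1)² = (X^q - 1)(X^r - 1) · ∑ X^w · (1 + X + ⋯ + X^{p-1})`, the sum running
over the weights `w = qr·c + pr·b + pq·a` with `c < p`, `b < q`, `a < r`. Below degree `pqr` the
square is invisible, so for `q + r ≤ k < pqr` one has
`a_{pqr}(k) = W(k) - W(k-q) - W(k-r) + W(k-q-r)`, where `W(m)` counts the triples with
`w ≤ m < w + p`.

Under the congruences write `p = 2p'+1`, `q = pu+2`, `2r+1 = spq` and `t = (qr+1)/p = ur+sq`, so
that `k = pp't`. As `qr ≡ -1 (mod p)`, the number `w + c = p(aq+br+ct)` is a multiple of `p`, so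
each of the four windows pins down `aq + br = (p'-c)t - E` for an explicit small `E`. Doubling and
reducing modulo `q`, where `2r ≡ -1`, then determines `b` and `2a`: for `m = k` one finds exactly
the `p'+1` triples `(c, (p'-c)u, (p'-c)s)` with `c ≤ p'`, and for the three shifted windows `a < 0`.
-/

open Polynomial

open Finset

theorem cyclotomic_mul_prime_mul_eq {R : Type*} [CommRing R] {n ℓ : ℕ} (hℓ : ℓ.Prime)
    (hn : ¬ℓ ∣ n) {A B : R[X]} (h : cyclotomic n R * A = B) :
    cyclotomic (n * ℓ) R * (B * expand R ℓ A) = A * expand R ℓ B := by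
  rw [← h, map_mul, cyclotomic_expand_eq_cyclotomic_mul hℓ hn]
  ring

theorem cyclotomic_three_primes_mul {R : Type*} [CommRing R] {p q r : ℕ} (hp : p.Prime)
    (hq : q.Prime) (hr : r.Prime) (hpq : p ≠ q) (hpr : p ≠ r) (hqr : q ≠ r) :
    cyclotomic (p * q * r) R *
        ((X - 1) * (X ^ (p * q) - 1) * ((X ^ (p * r) - 1) * (X ^ (q * r) - 1)))
      = (X ^ p - 1) * (X ^ q - 1) * ((X ^ r - 1) * (X ^ (p * q * r) - 1)) := by
  have h₁ : cyclotomic 1 R * 1 = X - 1 := by simp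
  have hp' := cyclotomic_mul_prime_mul_eq hp (by simpa using hp.ne_one) h₁
  have hq' := cyclotomic_mul_prime_mul_eq hq
    (by rw [one_mul, Nat.prime_dvd_prime_iff_eq hq hp]; exact hpq.symm) hp'
  have hr' := cyclotomic_mul_prime_mul_eq hr
    (by rw [one_mul, Nat.Prime.dvd_mul hr, Nat.prime_dvd_prime_iff_eq hr hp,
      Nat.prime_dvd_prime_iff_eq hr hq]; omega) hq'
  simp only [one_mul, map_mul, map_sub, map_one, map_pow, expand_X, ← pow_mul, mul_one] at hr'
  linear_combination hr'

def weight (p q r : ℕ) (x : ℕ × ℕ × ℕ) : ℕ := q * r * x.1 + p * r * x.2.1 + p * q * x.2.2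

def tripleBox (p q r : ℕ) : Finset (ℕ × ℕ × ℕ) := range p ×ˢ range q ×ˢ range r

def windowCount (p q r m : ℕ) : ℕ :=
  #{x ∈ tripleBox p q r | weight p q r x ≤ m ∧ m < weight p q r x + p}

theorem geom_sums_mul_eq_sum_tripleBox {R : Type*} [CommRing R] (p q r : ℕ) :
    (∑ c ∈ range p, (X ^ (q * r)) ^ c) * (∑ b ∈ range q, (X ^ (p * r)) ^ b) *
        ∑ a ∈ range r, ((X : R[X]) ^ (p * q)) ^ a
      = ∑ x ∈ tripleBox p q r, X ^ weight p q r x := by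
  rw [sum_mul_sum, sum_mul]
  simp only [sum_mul_sum, tripleBox, sum_product, weight, pow_add, ← pow_mul]

theorem coeff_sum_tripleBox {R : Type*} [CommRing R] (p q r m : ℕ) :
    (∑ x ∈ tripleBox p q r, X ^ weight p q r x * ∑ i ∈ range p, (X : R[X]) ^ i).coeff m
      = (windowCount p q r m : R) := by
  simp only [finsetSum_coeff, coeff_X_pow_mul', coeff_X_pow]
  rw [windowCount, natCast_card_filter]
  refine sum_congr rfl fun x _ => ?_
  by_cases h : weight p q r x ≤ m
  · simp only [if_pos h, sum_ite_eq, mem_range]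
    exact if_congr (by omega) rfl rfl
  · rw [if_neg h, if_neg (by omega)]

theorem coeff_mul_X_pow_sub_one_sq_of_lt {R : Type*} [CommRing R] (f : R[X]) {k N : ℕ}
    (hk : k < N) : (f * (X ^ N - 1) ^ 2).coeff k = f.coeff k := by
  rw [show f * (X ^ N - 1) ^ 2 = f + X ^ N * (X ^ N * f - 2 * f) by ring, coeff_add,
    coeff_X_pow_mul', if_neg (by omega), add_zero]

theorem coeff_X_pow_sub_one_mul_X_pow_sub_one_mul {R : Type*} [CommRing R] (f : R[X])
    {q r k : ℕ} (hk : q + r ≤ k) :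
    ((X ^ q - 1) * (X ^ r - 1) * f).coeff k
      = f.coeff k - f.coeff (k - q) - f.coeff (k - r) + f.coeff (k - q - r) := by
  rw [show (X ^ q - 1) * (X ^ r - 1) * f = X ^ (q + r) * f - X ^ q * f - X ^ r * f + f by ring]
  simp only [coeff_add, coeff_sub, coeff_X_pow_mul', if_pos hk, if_pos (le_of_add_le_left hk),
    if_pos (le_of_add_le_right hk), Nat.sub_sub]
  ring

theorem cyclotomic_mul_X_pow_sub_one_sq {p q r : ℕ} (hp : p.Prime) (hq : q.Prime)
    (hr : r.Prime) (hpq : p ≠ q) (hpr : p ≠ r) (hqr : q ≠ r) :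
    cyclotomic (p * q * r) ℤ * (X ^ (p * q * r) - 1) ^ 2
      = (X ^ q - 1) * (X ^ r - 1) *
          ∑ x ∈ tripleBox p q r, X ^ weight p q r x * ∑ i ∈ range p, X ^ i := by
  set Φ := cyclotomic (p * q * r) ℤ
  set g₁ := ∑ c ∈ range p, ((X : ℤ[X]) ^ (q * r)) ^ c
  set g₂ := ∑ b ∈ range q, ((X : ℤ[X]) ^ (p * r)) ^ b
  set g₃ := ∑ a ∈ range r, ((X : ℤ[X]) ^ (p * q)) ^ a
  set g₄ := ∑ i ∈ range p, (X : ℤ[X]) ^ i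
  have h := cyclotomic_three_primes_mul (R := ℤ) hp hq hr hpq hpr hqr
  have e₁ : g₁ * (X ^ (q * r) - 1) = X ^ (p * q * r) - 1 := by
    rw [geom_sum_mul, ← pow_mul]; ring
  have e₂ : g₂ * (X ^ (p * r) - 1) = X ^ (p * q * r) - 1 := by
    rw [geom_sum_mul, ← pow_mul]; ring
  have e₃ : g₃ * (X ^ (p * q) - 1) = X ^ (p * q * r) - 1 := by rw [geom_sum_mul, ← pow_mul]
  have e₄ : g₄ * (X - 1) = X ^ p - 1 := geom_sum_mul X p
  have hne : ((X : ℤ[X]) ^ p - 1) * (X ^ (p * q * r) - 1) ≠ 0 := by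
    have hN : 0 < p * q * r := Nat.mul_pos (Nat.mul_pos hp.pos hq.pos) hr.pos
    exact mul_ne_zero (by simpa using X_pow_sub_C_ne_zero hp.pos (1 : ℤ))
      (by simpa using X_pow_sub_C_ne_zero hN (1 : ℤ))
  rw [← sum_mul, ← geom_sums_mul_eq_sum_tripleBox]
  -- `h` times `g₁ g₂ g₃ g₄`, rewritten with `e₁, …, e₄`, is the claim times
  -- `(X^p - 1)(X^{pqr} - 1)`.
  refine mul_right_cancel₀ hne ?_
  linear_combination g₁ * g₂ * g₃ * g₄ * h
    - Φ * (X ^ (p * q * r) - 1) ^ 2 * (X ^ p - 1) * e₁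
    - Φ * (g₁ * (X ^ (q * r) - 1)) * (X ^ (p * q * r) - 1) * (X ^ p - 1) * e₂
    - Φ * (g₁ * (X ^ (q * r) - 1)) * (g₂ * (X ^ (p * r) - 1)) * (X ^ p - 1) * e₃
    - Φ * (g₁ * (X ^ (q * r) - 1)) * (g₂ * (X ^ (p * r) - 1)) * (g₃ * (X ^ (p * q) - 1)) * e₄

theorem cyclCoeff_three_primes {p q r k : ℕ} (hp : p.Prime) (hq : q.Prime) (hr : r.Prime)
    (hpq : p ≠ q) (hpr : p ≠ r) (hqr : q ≠ r) (hk : k < p * q * r) (hqrk : q + r ≤ k) :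
    cyclCoeff (p * q * r) k = windowCount p q r k - windowCount p q r (k - q)
      - windowCount p q r (k - r) + windowCount p q r (k - q - r) := by
  rw [cyclCoeff, ← coeff_mul_X_pow_sub_one_sq_of_lt _ hk,
    cyclotomic_mul_X_pow_sub_one_sq hp hq hr hpq hpr hqr,
    coeff_X_pow_sub_one_mul_X_pow_sub_one_mul _ hqrk]
  simp only [coeff_sum_tripleBox]

theorem windowCount_sub_eq_zero {p q r k σ : ℕ} (hσ : σ ≤ k)
    (H : ∀ a b c : ℤ, 0 ≤ a → 0 ≤ b → b < q → 0 ≤ c → c < p →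
      q * r * c + p * r * b + p * q * a + σ ≤ (k : ℤ) →
      (k : ℤ) < q * r * c + p * r * b + p * q * a + σ + p → False) :
    windowCount p q r (k - σ) = 0 := by
  rw [windowCount, card_eq_zero, filter_eq_empty_iff]
  rintro ⟨c, b, a⟩ hx ⟨h₀, h₁⟩
  simp only [tripleBox, mem_product, mem_range] at hx
  have h₀' : weight p q r (c, b, a) + σ ≤ k := by omega
  have h₁' : k < weight p q r (c, b, a) + σ + p := by omega
  simp only [weight] at h₀' h₁'
  exact H a b c (by positivity) (by positivity) (by exact_mod_cast hx.2.1) (by positivity)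
    (by exact_mod_cast hx.1) (by exact_mod_cast h₀') (by exact_mod_cast h₁')

theorem eq_of_mul_add_mul_eq {p q r s t u a b j E e f : ℤ}
    (hr : 2 * r + 1 = s * p * q) (ht : t = u * r + s * q)
    (h : a * q + b * r = j * t - E) (hE : 2 * E = e + q * f)
    (hb : 0 ≤ b) (hbq : b < q) (he : 0 ≤ j * u + e) (heq : j * u + e < q) :
    b = j * u + e ∧ 2 * a = s * (2 * j - e * p) - f := by
  have key : b - (j * u + e) = q * (2 * a + b * s * p - j * u * s * p - 2 * j * s + f) := by
    linear_combination (-2) * h + (b - j * u) * hr - 2 * j * ht + hE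
  have hb' : b = j * u + e := by
    have := Int.eq_zero_of_abs_lt_dvd ⟨_, key⟩ (abs_lt.mpr ⟨by linarith, by linarith⟩)
    linarith
  refine ⟨hb', ?_⟩
  have hq : q ≠ 0 := by linarith
  have := (mul_eq_zero.mp (key.symm.trans (by rw [hb', sub_self]))).resolve_left hq
  linear_combination this - s * p * hb'

theorem eq_zero_or_eq_one_of_window {p Q x : ℤ} (h₀ : 0 ≤ p * Q + x) (h₁ : p * Q + x < p)
    (hx₀ : -p ≤ x) (hx₁ : x < p) : (0 ≤ x ∧ Q = 0) ∨ (x < 0 ∧ Q = 1) := by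
  have hp : 0 < p := by linarith
  rcases le_or_gt 0 x with hx | hx
  · refine Or.inl ⟨hx, le_antisymm ?_ ?_⟩
    · by_contra! hQ; nlinarith
    · by_contra! hQ; nlinarith
  · refine Or.inr ⟨hx, le_antisymm ?_ ?_⟩
    · by_contra! hQ; nlinarith
    · by_contra! hQ; nlinarith

/-- The parameters forced by the congruences: `p' = (p-1)/2`, `u = q / p`, `s = (2r+1)/(pq)`,
`v = r / p` and `t = (qr+1)/p`. -/
structure MollerParams (p q r p' u s v t : ℤ) : Prop where
  p_eq : p = 2 * p' + 1
  two_le_p' : 2 ≤ p'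
  q_eq : q = p * u + 2
  one_le_u : 1 ≤ u
  r_eq : 2 * r + 1 = s * p * q
  one_le_s : 1 ≤ s
  v_eq : 2 * v + 1 = s * q
  t_eq : t = u * r + s * q

namespace MollerParams

section

variable {p q r p' u s v t : ℤ}

theorem p_mul_t (P : MollerParams p q r p' u s v t) : p * t = q * r + 1 := by
  linear_combination p * P.t_eq - r * P.q_eq - P.r_eq

theorem r_eq_mul_add (P : MollerParams p q r p' u s v t) : r = p * v + p' := by
  have : 2 * r = 2 * (p * v + p') := by linear_combination P.r_eq - p * P.v_eq + P.p_eq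
  exact mul_left_cancel₀ two_ne_zero this

theorem p_pos (P : MollerParams p q r p' u s v t) : 0 < p := by
  linarith [P.p_eq, P.two_le_p']

theorem two_le_q (P : MollerParams p q r p' u s v t) : 2 ≤ q := by
  nlinarith [P.p_pos, P.q_eq, P.one_le_u]

theorem q_pos (P : MollerParams p q r p' u s v t) : 0 < q := by
  linarith [P.two_le_q]

theorem r_pos (P : MollerParams p q r p' u s v t) : 0 < r := by
  have hsp : 1 ≤ s * p := by nlinarith [P.one_le_s, P.p_pos]
  nlinarith [P.r_eq, mul_le_mul hsp P.two_le_q zero_le_two (by linarith)]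

theorem t_pos (P : MollerParams p q r p' u s v t) : 0 < t := by
  nlinarith [P.t_eq, P.one_le_u, P.one_le_s, P.q_pos, P.r_pos]

theorem v_pos (P : MollerParams p q r p' u s v t) : 0 < v := by
  nlinarith [P.v_eq, P.one_le_s, P.two_le_q]

theorem mul_u_lt (P : MollerParams p q r p' u s v t) : p' * u < q := by
  nlinarith [P.p_eq, P.q_eq, P.one_le_u, P.two_le_p']

theorem mul_s_lt (P : MollerParams p q r p' u s v t) : p' * s < r := by
  have hsp : s * p = 2 * (s * p') + s := by linear_combination s * P.p_eq
  have hsp' : 0 ≤ s * p' := mul_nonneg (by linarith [P.one_le_s]) (by linarith [P.two_le_p'])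
  nlinarith [P.r_eq, P.one_le_s,
    mul_le_mul_of_nonneg_left P.two_le_q (by linarith [P.one_le_s] : 0 ≤ s * p)]

theorem lt_mul (P : MollerParams p q r p' u s v t) : p * p' * t < p * q * r := by
  have hk : p * p' * t = p' * (q * r) + p' := by linear_combination p' * P.p_mul_t
  have hqr : 1 ≤ q * r := mul_pos P.q_pos P.r_pos
  nlinarith [P.p_eq, P.two_le_p']

theorem add_le (P : MollerParams p q r p' u s v t) : q + r ≤ p * p' * t := by
  have hk : p * p' * t = p' * (q * r + 1) := by linear_combination p' * P.p_mul_t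
  have hqr : q + r ≤ q * r + 1 := by nlinarith [P.q_pos, P.r_pos]
  have hqr₀ : 0 ≤ q * r + 1 := by nlinarith [P.q_pos, P.r_pos]
  nlinarith [mul_le_mul_of_nonneg_right P.two_le_p' hqr₀]

theorem weight_eq (P : MollerParams p q r p' u s v t) (c : ℤ) :
    q * r * c + p * r * ((p' - c) * u) + p * q * ((p' - c) * s) = p * p' * t - c := by
  linear_combination (-c) * P.p_mul_t - p * (p' - c) * P.t_eq

theorem nonneg_of_mul_add_mul_eq (P : MollerParams p q r p' u s v t) {a b j E : ℤ}
    (ha : 0 ≤ a) (hb : 0 ≤ b) (h : a * q + b * r = j * t - E) (hE : 0 ≤ E) : 0 ≤ j :=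
  Int.nonneg_of_mul_nonneg_left
    (by nlinarith [mul_nonneg ha P.q_pos.le, mul_nonneg hb P.r_pos.le]) P.t_pos

theorem pos_of_mul_add_mul_eq (P : MollerParams p q r p' u s v t) {a b j E : ℤ}
    (ha : 0 ≤ a) (hb : 0 ≤ b) (h : a * q + b * r = j * t - E) (hE : 0 < E) : 0 < j :=
  Int.pos_of_mul_pos_left
    (by nlinarith [mul_nonneg ha P.q_pos.le, mul_nonneg hb P.r_pos.le]) P.t_pos

theorem window_shift (P : MollerParams p q r p' u s v t) {a b c α β : ℤ} (hc : 0 ≤ c)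
    (hcp : c < p) (hβ : 0 ≤ β) (hβp : β ≤ p)
    (h₀ : q * r * c + p * r * b + p * q * a + (p * α + β) ≤ p * p' * t)
    (h₁ : p * p' * t < q * r * c + p * r * b + p * q * a + (p * α + β) + p) :
    (β ≤ c ∧ a * q + b * r = (p' - c) * t - α) ∨
      (c < β ∧ a * q + b * r = (p' - c) * t - α - 1) := by
  have hw : p * p' * t - (q * r * c + p * r * b + p * q * a + (p * α + β))
      = p * (p' * t - (a * q + b * r + c * t) - α) + (c - β) := by
    linear_combination c * P.p_mul_t
  rcases eq_zero_or_eq_one_of_window (p := p) (Q := p' * t - (a * q + b * r + c * t) - α)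
    (x := c - β) (by linarith) (by linarith) (by linarith) (by linarith)
    with ⟨hx, hQ⟩ | ⟨hx, hQ⟩
  · exact Or.inl ⟨by linarith, by linear_combination -hQ⟩
  · exact Or.inr ⟨by linarith, by linear_combination -hQ⟩

theorem false_of_mul_add_mul_eq (P : MollerParams p q r p' u s v t) {a b j E e f : ℤ}
    (ha : 0 ≤ a) (hb : 0 ≤ b) (hbq : b < q) (hj : j ≤ p') (h : a * q + b * r = j * t - E)
    (hE : 2 * E = e + q * f) (he : 1 ≤ e) (he' : e ≤ 2 * u + 2) (hf : 0 ≤ f) : False := by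
  have hj₀ := P.nonneg_of_mul_add_mul_eq ha hb h (by nlinarith [P.q_pos])
  have hju : j * u + e < q := by nlinarith [P.p_eq, P.two_le_p', P.q_eq, P.one_le_u]
  obtain ⟨-, ha'⟩ := eq_of_mul_add_mul_eq P.r_eq P.t_eq h hE hb hbq
    (by nlinarith [P.one_le_u]) hju
  have hep : 2 * j - e * p ≤ -1 := by nlinarith [P.p_eq, P.p_pos]
  nlinarith [P.one_le_s]

theorem eq_of_mem_window (P : MollerParams p q r p' u s v t) {a b c : ℤ} (ha : 0 ≤ a)
    (hb : 0 ≤ b) (hbq : b < q) (hc : 0 ≤ c) (hcp : c < p)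
    (h₀ : q * r * c + p * r * b + p * q * a ≤ p * p' * t)
    (h₁ : p * p' * t < q * r * c + p * r * b + p * q * a + p) :
    c ≤ p' ∧ b = (p' - c) * u ∧ a = (p' - c) * s := by
  rcases P.window_shift (a := a) (b := b) (α := 0) (β := 0) hc hcp le_rfl P.p_pos.le
    (by linarith) (by linarith) with ⟨-, h⟩ | ⟨hc', -⟩
  · have h' : a * q + b * r = (p' - c) * t - 0 := by linarith
    have hj := P.nonneg_of_mul_add_mul_eq ha hb h' le_rfl
    obtain ⟨hb', ha'⟩ := eq_of_mul_add_mul_eq (e := 0) (f := 0) P.r_eq P.t_eq h' (by ring) hb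
      hbq (by nlinarith [P.one_le_u]) (by nlinarith [P.mul_u_lt, P.one_le_u])
    exact ⟨by linarith, by linarith, by linarith⟩
  · exact absurd hc' (not_lt.mpr hc)

theorem not_mem_window_sub_q (P : MollerParams p q r p' u s v t) {a b c : ℤ} (ha : 0 ≤ a)
    (hb : 0 ≤ b) (hbq : b < q) (hc : 0 ≤ c) (hcp : c < p)
    (h₀ : q * r * c + p * r * b + p * q * a + q ≤ p * p' * t)
    (h₁ : p * p' * t < q * r * c + p * r * b + p * q * a + q + p) : False := by
  rcases P.window_shift (a := a) (b := b) (α := u) (β := 2) hc hcp zero_le_two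
    (by linarith [P.p_eq, P.two_le_p']) (by linarith [P.q_eq]) (by linarith [P.q_eq])
    with ⟨-, h⟩ | ⟨-, h⟩
  · exact P.false_of_mul_add_mul_eq (j := p' - c) (e := 2 * u) (f := 0) ha hb hbq (by linarith)
      h (by ring) (by linarith [P.one_le_u]) (by linarith) le_rfl
  · exact P.false_of_mul_add_mul_eq (j := p' - c) (E := u + 1) (e := 2 * u + 2) (f := 0) ha hb hbq
      (by linarith) (h.trans (by ring)) (by ring) (by linarith [P.one_le_u]) le_rfl le_rfl

theorem not_mem_window_sub_r (P : MollerParams p q r p' u s v t) {a b c : ℤ} (ha : 0 ≤ a)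
    (hb : 0 ≤ b) (hbq : b < q) (hc : 0 ≤ c) (hcp : c < p)
    (h₀ : q * r * c + p * r * b + p * q * a + r ≤ p * p' * t)
    (h₁ : p * p' * t < q * r * c + p * r * b + p * q * a + r + p) : False := by
  rcases P.window_shift (a := a) (b := b) (α := v) (β := p') hc hcp
    (by linarith [P.two_le_p']) (by linarith [P.p_eq, P.two_le_p'])
    (by linarith [P.r_eq_mul_add]) (by linarith [P.r_eq_mul_add]) with ⟨hc', h⟩ | ⟨-, h⟩
  · linarith [P.pos_of_mul_add_mul_eq ha hb h P.v_pos]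
  · exact P.false_of_mul_add_mul_eq (j := p' - c) (E := v + 1) (e := 1) (f := s) ha hb hbq
      (by linarith) (h.trans (by ring)) (by linear_combination P.v_eq) le_rfl
      (by linarith [P.one_le_u]) (by linarith [P.one_le_s])

theorem not_mem_window_sub_q_add_r (P : MollerParams p q r p' u s v t) {a b c : ℤ}
    (ha : 0 ≤ a) (hb : 0 ≤ b) (hbq : b < q) (hc : 0 ≤ c) (hcp : c < p)
    (h₀ : q * r * c + p * r * b + p * q * a + (q + r) ≤ p * p' * t)
    (h₁ : p * p' * t < q * r * c + p * r * b + p * q * a + (q + r) + p) : False := by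
  rcases P.window_shift (a := a) (b := b) (α := u + v) (β := p' + 2) hc hcp
    (by linarith [P.two_le_p']) (by linarith [P.p_eq, P.two_le_p'])
    (by linarith [P.q_eq, P.r_eq_mul_add]) (by linarith [P.q_eq, P.r_eq_mul_add])
    with ⟨hc', h⟩ | ⟨-, h⟩
  · linarith [P.pos_of_mul_add_mul_eq ha hb h (by linarith [P.one_le_u, P.v_pos])]
  · exact P.false_of_mul_add_mul_eq (j := p' - c) (E := u + v + 1) (e := 2 * u + 1) (f := s) ha
      hb hbq (by linarith) (h.trans (by ring)) (by linear_combination P.v_eq)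
      (by linarith [P.one_le_u]) (by linarith) (by linarith [P.one_le_s])

end

theorem windowCount_eq {p q r p' u s v t : ℕ} (P : MollerParams p q r p' u s v t) :
    windowCount p q r (p * p' * t) = p' + 1 := by
  have hinj : Function.Injective fun c : ℕ => (c, (p' - c) * u, (p' - c) * s) :=
    fun c c' h => (Prod.mk.injEq _ _ _ _ ▸ h).1
  suffices h : {x ∈ tripleBox p q r | weight p q r x ≤ p * p' * t ∧
      p * p' * t < weight p q r x + p}
      = (range (p' + 1)).image fun c => (c, (p' - c) * u, (p' - c) * s) by
    rw [windowCount, h, card_image_of_injective _ hinj, card_range]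
  ext ⟨c, b, a⟩
  simp only [mem_filter, mem_image, tripleBox, mem_product, mem_range, Prod.mk.injEq]
  simp only [weight]
  constructor
  · rintro ⟨⟨hc, hb, -⟩, h₀, h₁⟩
    obtain ⟨hcZ, hb', ha'⟩ := P.eq_of_mem_window (a := a) (b := b) (c := c) (by positivity)
      (by positivity) (by exact_mod_cast hb) (by positivity) (by exact_mod_cast hc)
      (by exact_mod_cast h₀) (by exact_mod_cast h₁)
    have hcp : c ≤ p' := by exact_mod_cast hcZ
    refine ⟨c, by omega, rfl, ?_, ?_⟩ <;> zify [hcp] <;> linarith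
  · rintro ⟨c, hc, rfl, rfl, rfl⟩
    have hc' : c ≤ p' := by omega
    have hw := P.weight_eq c
    zify [hc']
    have hcp : (c : ℤ) < p := by linarith [P.p_eq, (by exact_mod_cast hc' : (c : ℤ) ≤ p')]
    refine ⟨⟨hcp, ?_, ?_⟩, by linarith, by linarith⟩
    · nlinarith [P.mul_u_lt, P.one_le_u]
    · nlinarith [P.mul_s_lt, P.one_le_s]

theorem windowCount_shifts_eq_zero {p q r p' u s v t : ℕ} (P : MollerParams p q r p' u s v t) :
    windowCount p q r (p * p' * t - q) = 0 ∧ windowCount p q r (p * p' * t - r) = 0 ∧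
      windowCount p q r (p * p' * t - q - r) = 0 := by
  have hle : q + r ≤ p * p' * t := by exact_mod_cast P.add_le
  refine ⟨windowCount_sub_eq_zero (by omega) fun a b c ha hb hbq hc hcp h₀ h₁ => ?_,
    windowCount_sub_eq_zero (by omega) fun a b c ha hb hbq hc hcp h₀ h₁ => ?_, ?_⟩
  · exact P.not_mem_window_sub_q ha hb hbq hc hcp (by exact_mod_cast h₀) (by exact_mod_cast h₁)
  · exact P.not_mem_window_sub_r ha hb hbq hc hcp (by exact_mod_cast h₀) (by exact_mod_cast h₁)
  · rw [Nat.sub_sub]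
    refine windowCount_sub_eq_zero hle fun a b c ha hb hbq hc hcp h₀ h₁ => ?_
    exact P.not_mem_window_sub_q_add_r ha hb hbq hc hcp (by exact_mod_cast h₀)
      (by exact_mod_cast h₁)

end MollerParams

theorem exists_mollerParams {p q r : ℕ} (hp : p.Prime) (hq : q.Prime) (hp3 : 3 < p)
    (hpq : p < q) (hqmod : q ≡ 2 [MOD p]) (hrmodp : r ≡ (p - 1) / 2 [MOD p])
    (hrmodq : r ≡ (q - 1) / 2 [MOD q]) :
    ∃ p' u s v t : ℕ, MollerParams p q r p' u s v t := by
  obtain ⟨p', hp'⟩ := hp.odd_of_ne_two (by omega)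
  obtain ⟨q', hq'⟩ := hq.odd_of_ne_two (by omega)
  obtain ⟨u, hu⟩ : ∃ u, q = p * u + 2 := ⟨q / p, by
    rw [← Nat.mod_eq_of_lt (by omega : 2 < p), ← hqmod, Nat.div_add_mod]⟩
  obtain ⟨v, hv⟩ : ∃ v, r = p * v + p' := ⟨r / p, by
    rw [← Nat.mod_eq_of_lt (by omega : p' < p), show p' = (p - 1) / 2 by omega, ← hrmodp,
      Nat.div_add_mod]⟩
  obtain ⟨w, hw⟩ : ∃ w, r = q * w + q' := ⟨r / q, by
    rw [← Nat.mod_eq_of_lt (by omega : q' < q), show q' = (q - 1) / 2 by omega, ← hrmodq,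
      Nat.div_add_mod]⟩
  have hrp : 2 * r + 1 = p * (2 * v + 1) := by rw [hv, hp']; ring
  obtain ⟨s, hs⟩ : p * q ∣ 2 * r + 1 :=
    Nat.Coprime.mul_dvd_of_dvd_of_dvd ((Nat.coprime_primes hp hq).mpr hpq.ne)
      ⟨_, hrp⟩ ⟨2 * w + 1, by rw [hw, hq']; ring⟩
  have hsv : 2 * v + 1 = s * q := Nat.eq_of_mul_eq_mul_left hp.pos (by rw [← hrp, hs]; ring)
  have hu₁ : 1 ≤ u := Nat.pos_of_ne_zero (by rintro rfl; omega)
  have hs₁ : 1 ≤ s := Nat.pos_of_ne_zero (by rintro rfl; omega)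
  have hr : 2 * r + 1 = s * p * q := by rw [hs]; ring
  exact ⟨p', u, s, v, u * r + s * q, by exact_mod_cast hp', by exact_mod_cast (by omega : 2 ≤ p'),
    by exact_mod_cast hu, by exact_mod_cast hu₁, by exact_mod_cast hr, by exact_mod_cast hs₁,
    by exact_mod_cast hsv, by push_cast; ring⟩

/-- Möller: if `p > 3`, `q ≡ 2 (mod p)`, `r ≡ (p-1)/2 (mod p)`,
`r ≡ (q-1)/2 (mod q)`, then for `k = (p-1)(qr+1)/2` one has `a_{pqr}(k) = (p+1)/2`. -/
theorem stmt5 (p q r : ℕ) (hp : p.Prime) (hq : q.Prime) (hr : r.Prime)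
    (hp3 : 3 < p) (hpq : p < q) (hqr : q < r)
    (hqmod : q ≡ 2 [MOD p]) (hrmodp : r ≡ (p - 1) / 2 [MOD p]) (hrmodq : r ≡ (q - 1) / 2 [MOD q])
    (k : ℕ) (hk : k = (p - 1) * (q * r + 1) / 2) :
    cyclCoeff (p * q * r) k = ((p : ℤ) + 1) / 2 := by
  obtain ⟨p', u, s, v, t, P⟩ := exists_mollerParams hp hq hp3 hpq hqmod hrmodp hrmodq
  have hp' : p = 2 * p' + 1 := by exact_mod_cast P.p_eq
  have hpt : p * t = q * r + 1 := by exact_mod_cast P.p_mul_t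
  have hk' : k = p * p' * t := by
    rw [hk, show (p - 1) * (q * r + 1) = 2 * (p * p' * t) by
      rw [← hpt, hp', Nat.add_sub_cancel]; ring, Nat.mul_div_cancel_left _ two_pos]
  obtain ⟨hq₀, hr₀, hqr₀⟩ := P.windowCount_shifts_eq_zero
  rw [hk', cyclCoeff_three_primes hp hq hr hpq.ne (by omega) hqr.ne
    (by exact_mod_cast P.lt_mul) (by exact_mod_cast P.add_le), P.windowCount_eq, hq₀, hr₀, hqr₀,
    hp']
  push_cast
  omega
end

section
/- Let 2 < p < q be odd primes. Then M(p;q) ≥ 2; that is, there exist a prime r > q and an integer k ≥ 0 with |a_{pqr}(k)| ≥ 2. -/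
open Polynomial

open Finset in

lemma coeff_cyclotomic_prime (q : ℕ) (hq : q.Prime) (m : ℕ) :
    (cyclotomic q ℤ).coeff m = if m < q then 1 else 0 := by
  haveI : Fact q.Prime := ⟨hq⟩
  rw [cyclotomic_prime, finset_sum_coeff]
  simp only [coeff_X_pow]
  rw [Finset.sum_ite_eq (Finset.range q) m fun _ => (1:ℤ)]
  simp [Finset.mem_range]

lemma key (p q r : ℕ) (hp : p.Prime) (hq : q.Prime) (hr : r.Prime)
    (h2p : 2 < p) (hpq : p < q) (hqr : q < r)
    (j0 : ℕ) (hj1 : 1 ≤ j0) (hjp : j0 < p) (hmod : (r + q) % (p * q) = j0) :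
    (cyclotomic (p * q * r) ℤ).coeff (r + q) = 2 := by
  have hp3 : 3 ≤ p := h2p
  have hq5 : 5 ≤ q := by
    have h4 : q ≠ 4 := fun h => by rw [h] at hq; norm_num at hq
    omega
  have hpq15 : 15 ≤ p * q := by calc 15 = 3 * 5 := rfl
                                    _ ≤ p * q := Nat.mul_le_mul hp3 hq5
  have hpqsum : p + q ≤ p * q := by
    calc p + q ≤ q + q := by omega
    _ = 2 * q := by ring
    _ ≤ p * q := Nat.mul_le_mul_right q (by omega)
  set Q : ℤ[X] := cyclotomic q ℤ with hQ
  set B : ℤ[X] := cyclotomic (p * q) ℤ with hB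
  set A : ℤ[X] := cyclotomic (p * q * r) ℤ with hA
  set g : ℤ[X] := (1 - X ^ p) * Q with hg
  set P : ℤ[X] := ∑ i ∈ Finset.range r, (X ^ (p * q) : ℤ[X]) ^ i with hP
  haveI : Fact q.Prime := ⟨hq⟩
  -- basic coefficient facts about g
  have gc : ∀ m, g.coeff m =
      (if m < q then (1:ℤ) else 0) - (if p ≤ m then (if m - p < q then (1:ℤ) else 0) else 0) := by
    intro m
    rw [hg, sub_mul, one_mul, coeff_sub, coeff_cyclotomic_prime q hq,
      coeff_X_pow_mul' Q p m]
    split_ifs with h1 h2 h3 <;>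
      simp [coeff_cyclotomic_prime q hq, *]
  have gvanish : ∀ m, p + q ≤ m → g.coeff m = 0 := by
    intro m hm
    rw [gc]
    have h1 : ¬ m < q := by omega
    have h2 : p ≤ m := by omega
    have h3 : ¬ m - p < q := by omega
    simp [h1, h2, h3]
  have g0 : g.coeff 0 = 1 := by rw [gc]; have : ¬ p ≤ 0 := by omega
                                simp [this, hq.pos]
  have g1 : g.coeff 1 = 1 := by rw [gc]; have h1 : (1:ℕ) < q := by omega
                                have h2 : ¬ p ≤ 1 := by omega
                                simp [h1, h2]
  have gq : g.coeff q = -1 := by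
    rw [gc]
    have h1 : ¬ q < q := lt_irrefl q
    have h2 : p ≤ q := le_of_lt hpq
    have h3 : q - p < q := by omega
    simp [h1, h2, h3]
  have gj : g.coeff j0 = 1 := by
    rw [gc]
    have h1 : j0 < q := by omega
    have h2 : ¬ p ≤ j0 := by omega
    simp [h1, h2]
  -- the fundamental polynomial identities
  have hpdq : ¬ p ∣ q := fun h => by
    rcases (Nat.prime_dvd_prime_iff_eq hp hq).mp h with rfl; omega
  have hrdpq : ¬ r ∣ p * q := by
    intro h
    rcases (Nat.Prime.dvd_mul hr).mp h with h | h <;>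
      exact absurd ((Nat.prime_dvd_prime_iff_eq hr (by assumption)).mp h) (by omega)
  have gB : g * B = 1 - X ^ (p * q) := by
    have e1 : Q * (X - 1) = X ^ q - 1 := cyclotomic_prime_mul_X_sub_one ℤ q
    have e2 := cyclotomic_expand_eq_cyclotomic_mul hp hpdq (R := ℤ)
    -- e2 : expand ℤ p (cyclotomic q ℤ) = cyclotomic (q * p) ℤ * cyclotomic q ℤ
    have e3 := congrArg (expand ℤ p) e1
    simp only [map_mul, map_sub, map_one, map_pow, expand_X] at e3
    rw [← hQ] at e2
    rw [e2, mul_comm q p, ← hB] at e3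
    -- e3 : (B * Q) * ((X^p) - 1) = (X^p)^q - 1
    have hxp : (X : ℤ[X]) ^ (p * q) = (X ^ p) ^ q := by rw [← pow_mul]
    rw [hg, hxp]
    linear_combination -e3
  have eB : expand ℤ r B = A * B := by
    have := cyclotomic_expand_eq_cyclotomic_mul hr hrdpq (R := ℤ)
    rw [hB, hA, mul_assoc] at *
    exact this
  have hgeom : P * (X ^ (p * q) - 1) = X ^ (p * q * r) - 1 := by
    rw [hP, geom_sum_mul, ← pow_mul]
  have keyid : A * (1 - X ^ (p * q * r)) = expand ℤ r B * (g * P) := by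
    rw [eB]
    linear_combination A * hgeom - (A * P) * gB
  -- coefficients of B
  have B0 : B.coeff 0 = 1 := cyclotomic_coeff_zero ℤ (show 1 < p * q by omega)
  have B1 : B.coeff 1 = -1 := by
    have h := congrArg (fun f : ℤ[X] => f.coeff 1) gB
    simp only [coeff_sub, coeff_one, coeff_X_pow, coeff_mul,
      Finset.Nat.sum_antidiagonal_eq_sum_range_succ_mk] at h
    rw [Finset.sum_range_succ, Finset.sum_range_succ, Finset.sum_range_zero] at h
    norm_num [g0, g1, B0] at h
    have hne : ¬ (1 = p * q) := by omega
    rw [if_neg hne] at h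
    linarith
  have hwex : ∃ w : ℤ[X], B = 1 - X + X ^ 2 * w := by
    have hdvd : (X : ℤ[X]) ^ 2 ∣ (B - (1 - X)) := by
      rw [X_pow_dvd_iff]
      intro d hd
      interval_cases d <;> simp [B0, B1, coeff_one]
    obtain ⟨w, hw⟩ := hdvd
    exact ⟨w, by linear_combination hw⟩
  obtain ⟨w, hBw⟩ := hwex
  have expandB : expand ℤ r B = 1 - X ^ r + X ^ (2 * r) * expand ℤ r w := by
    rw [hBw]
    simp only [map_add, map_sub, map_one, map_mul, map_pow, expand_X]
    ring
  -- coefficients of H = g * P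
  set H : ℤ[X] := g * P with hH
  have Hc : ∀ m, H.coeff m =
      ∑ i ∈ Finset.range r, if p * q * i ≤ m then g.coeff (m - p * q * i) else 0 := by
    intro m
    rw [hH, hP, Finset.mul_sum, finset_sum_coeff]
    refine Finset.sum_congr rfl fun i _ => ?_
    rw [← pow_mul, coeff_mul_X_pow']
  have Hq : H.coeff q = -1 := by
    rw [Hc]
    rw [Finset.sum_eq_single_of_mem 0 (Finset.mem_range.mpr hr.pos)]
    · simp [gq]
    · intro i _ hi
      have h1 : p * q * 1 ≤ p * q * i := Nat.mul_le_mul_left _ (by omega)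
      have h2 : ¬ p * q * i ≤ q := by omega
      simp [h2]
  have hdm := Nat.div_add_mod (r + q) (p * q)
  set s := (r + q) / (p * q) with hs
  have hsplit : p * q * s + j0 = r + q := by rw [hmod] at hdm; exact hdm
  have hslt : s < r := by
    by_contra hc
    have h1 : p * q * r ≤ p * q * s := Nat.mul_le_mul_left _ (by omega)
    have h2 : 15 * r ≤ p * q * r := Nat.mul_le_mul_right _ hpq15
    omega
  have Hrq : H.coeff (r + q) = 1 := by
    rw [Hc]
    rw [Finset.sum_eq_single_of_mem s (Finset.mem_range.mpr hslt)]
    · have hle : p * q * s ≤ r + q := by omega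
      have he : r + q - p * q * s = j0 := by omega
      rw [if_pos hle, he, gj]
    · intro i _ hi
      rcases lt_or_gt_of_ne hi with h | h
      · have h1 : p * q * (i + 1) ≤ p * q * s := Nat.mul_le_mul_left _ (by omega)
        rw [mul_add, mul_one] at h1
        have hle : p * q * i ≤ r + q := by omega
        rw [if_pos hle, gvanish]
        omega
      · have h1 : p * q * (s + 1) ≤ p * q * i := Nat.mul_le_mul_left _ (by omega)
        rw [mul_add, mul_one] at h1
        have h2 : ¬ p * q * i ≤ r + q := by omega
        simp [h2]
  -- putting everything together
  have final : (A * (1 - X ^ (p * q * r))).coeff (r + q)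
      = (expand ℤ r B * H).coeff (r + q) := congrArg (fun f : ℤ[X] => f.coeff (r + q)) keyid
  have l1 : (A * (1 - X ^ (p * q * r))).coeff (r + q) = A.coeff (r + q) := by
    rw [mul_sub, mul_one, coeff_sub, coeff_mul_X_pow']
    have h2 : 15 * r ≤ p * q * r := Nat.mul_le_mul_right _ hpq15
    have h : ¬ p * q * r ≤ r + q := by omega
    simp [h]
  have r1 : (expand ℤ r B * H).coeff (r + q) = H.coeff (r + q) - H.coeff q := by
    rw [expandB]
    have e1 : ((X : ℤ[X]) ^ r * H).coeff (r + q) = H.coeff q := by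
      rw [coeff_X_pow_mul']
      rw [if_pos (Nat.le_add_right r q)]
      congr 1
      omega
    have e2 : ((X : ℤ[X]) ^ (2 * r) * (expand ℤ r w * H)).coeff (r + q) = 0 := by
      rw [coeff_X_pow_mul']
      have h : ¬ 2 * r ≤ r + q := by omega
      simp [h]
    rw [add_mul, sub_mul, one_mul, mul_assoc, coeff_add, coeff_sub, e1, e2, add_zero]
  rw [l1, r1, Hrq, Hq] at final
  rw [final]
  norm_num

/-- for odd primes `2 < p < q` we have `M(p;q) ≥ 2`. -/
theorem stmt16 (p q : ℕ) (hp : p.Prime) (hq : q.Prime) (h2p : 2 < p) (hpq : p < q) :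
    ∃ r k : ℕ, r.Prime ∧ q < r ∧ 2 ≤ |cyclCoeff (p * q * r) k| := by
  have hp3 : 3 ≤ p := h2p
  have hq5 : 5 ≤ q := by
    have h4 : q ≠ 4 := fun h => by rw [h] at hq; norm_num at hq
    omega
  haveI : NeZero (p * q) := ⟨by positivity⟩
  haveI : Fact (1 < p) := ⟨by omega⟩
  set j0 : ℕ := if (q : ZMod p) = 1 then 2 else 1 with hj0
  have hj1 : 1 ≤ j0 := by rw [hj0]; split_ifs <;> omega
  have hjp : j0 < p := by rw [hj0]; split_ifs <;> omega
  have hjq : (j0 : ZMod p) ≠ (q : ZMod p) := by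
    rw [hj0]
    split_ifs with h
    · rw [h]
      push_cast
      intro hc
      have h10 : (1 : ZMod p) = 0 := by linear_combination hc
      exact one_ne_zero h10
    · intro hc
      push_cast at hc
      exact h hc.symm
  set x : ℕ := q * (p - 1) + j0 with hx
  have hxp : ¬ p ∣ x := by
    intro hdvd
    have hc : ((x : ℕ) : ZMod p) = 0 := (ZMod.natCast_eq_zero_iff x p).mpr hdvd
    rw [hx] at hc
    push_cast [Nat.cast_sub (show 1 ≤ p by omega)] at hc
    rw [ZMod.natCast_self] at hc
    exact hjq (by linear_combination hc)
  have hxq : ¬ q ∣ x := by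
    intro hdvd
    have h1 : q ∣ j0 := (Nat.dvd_add_right (dvd_mul_right q (p - 1))).mp hdvd
    have := Nat.le_of_dvd (by omega) h1
    omega
  have hco : Nat.Coprime x (p * q) := Nat.Coprime.mul_right
      (Nat.coprime_comm.mp ((Nat.Prime.coprime_iff_not_dvd hp).mpr hxp))
      (Nat.coprime_comm.mp ((Nat.Prime.coprime_iff_not_dvd hq).mpr hxq))
  have hu : IsUnit ((x : ℕ) : ZMod (p * q)) := (ZMod.isUnit_iff_coprime x (p * q)).mpr hco
  obtain ⟨r, hrq, hr, hra⟩ := Nat.forall_exists_prime_gt_and_eq_mod hu q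
  have hcast : ((r + q : ℕ) : ZMod (p * q)) = ((j0 : ℕ) : ZMod (p * q)) := by
    push_cast
    rw [hra, hx]
    push_cast [Nat.cast_sub (show 1 ≤ p by omega)]
    have h0 : ((p * q : ℕ) : ZMod (p * q)) = 0 := ZMod.natCast_self _
    push_cast at h0
    linear_combination h0
  have hmod : (r + q) % (p * q) = j0 := by
    have hme := (ZMod.natCast_eq_natCast_iff _ _ _).mp hcast
    have hj : j0 % (p * q) = j0 := Nat.mod_eq_of_lt (by nlinarith)
    unfold Nat.ModEq at hme
    omega
  refine ⟨r, r + q, hr, hrq, ?_⟩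
  rw [cyclCoeff, key p q r hp hq hr h2p hpq hrq j0 hj1 hjp hmod]
  norm_num
end

section
/- Let 2 < p < q be odd primes and let ρ and σ be the unique non-negative integers with 1 + pq = (ρ+1)p + (σ+1)q. Then for every prime r > q and every integer k ≥ 0 one has |a_{pqr}(k)| ≤ p + ρ - σ if ρ ≤ σ, and |a_{pqr}(k)| ≤ q + σ - ρ if ρ > σ; that is, M(p;q) ≤ p + ρ - σ if ρ ≤ σ and M(p;q) ≤ q + σ - ρ if ρ > σ. -/
/-!
By Lam–Leung, with `ρ, σ` as in the statement,
`Φ_pq = ∑_{x ≤ ρ, y ≤ σ} X^(px+qy) - X ∑_{x < q-1-ρ, y < p-1-σ} X^(px+qy)`.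
Kaplan's identity `Φ_pqr (1 - X^pq) = (1 + X + ⋯ + X^(p-1)) (1 - X^q) Φ_pq(X^r)`, multiplied by
`1 + X^pq + ⋯ + X^(pqn)`, writes `a_pqr(n)` as `A + B - C - D`, where each term counts the
solutions of `n = e + j + r(px + qy) + pqk` with `j < p` and `(x, y)` in one of the two boxes.
As `r` is prime to `p` and `q` and `j < p < q`, such a solution is determined by `x` alone
(reduce mod `q`, then mod `p`) and by `y` alone (reduce mod `p`, then mod `q`), so each count is at
most the shorter side of its box. Hence `|a_pqr(n)| ≤ min (ρ+1) (σ+1) + min (q-1-ρ) (p-1-σ)`,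
which is `p + ρ - σ` if `ρ ≤ σ` and `q + σ - ρ` if `ρ > σ`.
-/

open Polynomial Finset

lemma sum_X_pow_mul_sum_X_pow {R α β : Type*} [CommSemiring R] (s : Finset α) (t : Finset β)
    (f : α → ℕ) (g : β → ℕ) :
    (∑ i ∈ s, (X : R[X]) ^ f i) * ∑ j ∈ t, X ^ g j = ∑ x ∈ s ×ˢ t, X ^ (f x.1 + g x.2) := by
  simp only [sum_mul_sum, sum_product, pow_add]

lemma coeff_X_pow_mul_sum_X_pow {R α : Type*} [CommSemiring R] (s : Finset α) (f : α → ℕ)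
    (e n : ℕ) : (X ^ e * ∑ i ∈ s, (X : R[X]) ^ f i).coeff n = (#{i ∈ s | e + f i = n} : R) := by
  simp only [mul_sum, ← pow_add, finsetSum_coeff, coeff_X_pow, card_filter, Nat.cast_sum,
    Nat.cast_ite, Nat.cast_one, Nat.cast_zero, @eq_comm _ n]

lemma X_pow_sub_one_ne_zero {n : ℕ} (hn : 0 < n) : (X : ℤ[X]) ^ n - 1 ≠ 0 := by
  simpa using X_pow_sub_C_ne_zero (R := ℤ) hn 1

lemma eq_and_eq_of_mul_add_mul_eq {a m y y' k k' : ℕ} (ha : m.Coprime a) (hy : y < m)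
    (hy' : y' < m) (h : a * y + m * k = a * y' + m * k') : y = y' ∧ k = k' := by
  have hmod : a * y ≡ a * y' [MOD m] := by
    simpa only [Nat.ModEq, Nat.add_mul_mod_self_left] using congrArg (· % m) h
  obtain rfl : y = y' := (hmod.cancel_left_of_coprime ha).eq_of_lt_of_lt hy hy'
  exact ⟨rfl, Nat.eq_of_mul_eq_mul_left (by omega) (Nat.add_left_cancel h)⟩

noncomputable def geomSumXPow (m a : ℕ) : ℤ[X] := ∑ i ∈ range a, X ^ (m * i)

lemma geomSumXPow_mul (m a : ℕ) : geomSumXPow m a * (X ^ m - 1) = X ^ (m * a) - 1 := by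
  simp only [geomSumXPow, pow_mul, geom_sum_mul]

lemma expand_geomSumXPow (r m a : ℕ) :
    expand ℤ r (geomSumXPow m a) = geomSumXPow (m * r) a := by
  simp only [geomSumXPow, map_sum, map_pow, expand_X, ← pow_mul, mul_right_comm, mul_comm r]

lemma cyclotomic_prime_mul_prime_mul_X_pow_sub_one {p q : ℕ} (hp : p.Prime) (hq : q.Prime)
    (hpq : p ≠ q) :
    cyclotomic (p * q) ℤ * ((X ^ p - 1) * (X ^ q - 1)) = (X ^ (p * q) - 1) * (X - 1) := by
  have := Fact.mk hp
  have hexpand : expand ℤ q (cyclotomic p ℤ) = cyclotomic (p * q) ℤ * cyclotomic p ℤ :=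
    cyclotomic_expand_eq_cyclotomic_mul hq
      (fun h => hpq ((Nat.prime_dvd_prime_iff_eq hq hp).mp h).symm) ℤ
  have hX_pow := congrArg (expand ℤ q) (cyclotomic_prime_mul_X_sub_one ℤ p)
  simp only [map_mul, map_sub, map_pow, map_one, expand_X, hexpand, ← pow_mul] at hX_pow
  rw [Nat.mul_comm q p] at hX_pow
  rw [← cyclotomic_prime_mul_X_sub_one ℤ p, ← hX_pow]
  ring

lemma X_pow_sub_one_mul_sub_X_mul {a b c d N : ℕ} (hab : a + b = N + 1) (hc : c + 1 = b)
    (hd : d + 1 = a) :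
    ((X : ℤ[X]) ^ a - 1) * (X ^ b - 1) - X * ((X ^ c - 1) * (X ^ d - 1))
      = (X ^ N - 1) * (X - 1) := by
  obtain rfl : N = c + d + 1 := by omega
  subst hc hd
  ring

lemma add_one_le_of_one_add_mul_eq {p q ρ σ : ℕ} (hp : 2 ≤ p) (hq : 2 ≤ q)
    (hρσ : 1 + p * q = (ρ + 1) * p + (σ + 1) * q) : ρ + 1 ≤ q ∧ σ + 1 ≤ p := by
  constructor <;> nlinarith

theorem cyclotomic_prime_mul_prime_eq {p q ρ σ : ℕ} (hp : p.Prime) (hq : q.Prime) (hpq : p ≠ q)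
    (hρσ : 1 + p * q = (ρ + 1) * p + (σ + 1) * q) :
    cyclotomic (p * q) ℤ = geomSumXPow p (ρ + 1) * geomSumXPow q (σ + 1)
      - X * (geomSumXPow p (q - 1 - ρ) * geomSumXPow q (p - 1 - σ)) := by
  obtain ⟨hρ, hσ⟩ := add_one_le_of_one_add_mul_eq hp.two_le hq.two_le hρσ
  refine mul_right_cancel₀ (mul_ne_zero (X_pow_sub_one_ne_zero hp.pos)
    (X_pow_sub_one_ne_zero hq.pos)) ?_
  rw [cyclotomic_prime_mul_prime_mul_X_pow_sub_one hp hq hpq, ← X_pow_sub_one_mul_sub_X_mul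
    (a := p * (ρ + 1)) (b := q * (σ + 1)) (c := p * (q - 1 - ρ)) (d := q * (p - 1 - σ))
    (by linarith) ?_ ?_]
  · rw [← geomSumXPow_mul p, ← geomSumXPow_mul q, ← geomSumXPow_mul p, ← geomSumXPow_mul q]
    ring
  all_goals
    zify [Nat.sub_sub, (by omega : 1 + ρ ≤ q), (by omega : 1 + σ ≤ p)] at hρσ ⊢
    linear_combination hρσ

theorem cyclotomic_mul_prime_mul_one_sub_X_pow {p q r : ℕ} (hp : p.Prime) (hq : q.Prime)
    (hr : r.Prime) (hpq : p ≠ q) (hrpq : ¬ r ∣ p * q) (K : ℕ) :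
    cyclotomic (p * q * r) ℤ * (1 - X ^ (p * q * K)) =
      (1 - X ^ q) * geomSumXPow 1 p * expand ℤ r (cyclotomic (p * q) ℤ)
        * geomSumXPow (p * q) K := by
  have hexpand := cyclotomic_expand_eq_cyclotomic_mul hr hrpq ℤ
  have hgeom := geomSumXPow_mul 1 p
  simp only [pow_one, one_mul] at hgeom
  refine mul_right_cancel₀ (X_pow_sub_one_ne_zero one_pos) ?_
  rw [pow_one]
  linear_combination
    (-(1 - X ^ q) * expand ℤ r (cyclotomic (p * q) ℤ) * geomSumXPow (p * q) K) * hgeom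
    - (1 - X ^ q) * geomSumXPow (p * q) K * (X ^ p - 1) * hexpand
    + cyclotomic (p * q * r) ℤ * geomSumXPow (p * q) K
      * cyclotomic_prime_mul_prime_mul_X_pow_sub_one hp hq hpq
    + cyclotomic (p * q * r) ℤ * (X - 1) * geomSumXPow_mul (p * q) K

/-- Solutions `(j, x, y, k)` of `n = e + j + r(px + qy) + pqk` with `j < p`, `x < a`, `y < b`;
the bound `k ≤ n` only serves to make the set finite. -/
def reprCount (p q r a b e n : ℕ) : ℕ :=
  #{t ∈ range p ×ˢ range a ×ˢ range b ×ˢ range (n + 1) |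
    e + (t.1 + (p * r * t.2.1 + (q * r * t.2.2.1 + p * q * t.2.2.2))) = n}

lemma coeff_X_pow_mul_geomSumXPow_mul (p q r a b e n : ℕ) :
    (X ^ e * (geomSumXPow 1 p * (geomSumXPow (p * r) a * (geomSumXPow (q * r) b *
      geomSumXPow (p * q) (n + 1))))).coeff n = (reprCount p q r a b e n : ℤ) := by
  simp only [geomSumXPow, sum_X_pow_mul_sum_X_pow, coeff_X_pow_mul_sum_X_pow]
  simp only [one_mul, reprCount]

theorem cyclotomic_coeff_eq_reprCount {p q r ρ σ : ℕ} (hp : p.Prime) (hq : q.Prime)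
    (hr : r.Prime) (hpq : p ≠ q) (hrpq : ¬ r ∣ p * q)
    (hρσ : 1 + p * q = (ρ + 1) * p + (σ + 1) * q) (n : ℕ) :
    (cyclotomic (p * q * r) ℤ).coeff n =
      (reprCount p q r (ρ + 1) (σ + 1) 0 n + reprCount p q r (q - 1 - ρ) (p - 1 - σ) (q + r) n
        : ℤ)
      - (reprCount p q r (q - 1 - ρ) (p - 1 - σ) r n + reprCount p q r (ρ + 1) (σ + 1) q n) := by
  have hM : ¬ p * q * (n + 1) ≤ n := by
    have := Nat.mul_pos hp.pos hq.pos
    nlinarith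
  have hcoeff : (cyclotomic (p * q * r) ℤ * (1 - X ^ (p * q * (n + 1)))).coeff n
      = (cyclotomic (p * q * r) ℤ).coeff n := by
    rw [mul_sub, mul_one, coeff_sub, coeff_mul_X_pow', if_neg hM, sub_zero]
  rw [← hcoeff, cyclotomic_mul_prime_mul_one_sub_X_pow hp hq hr hpq hrpq,
    cyclotomic_prime_mul_prime_eq hp hq hpq hρσ, map_sub, map_mul, map_mul, map_mul, expand_X]
  simp only [expand_geomSumXPow, ← coeff_X_pow_mul_geomSumXPow_mul, ← coeff_add, ← coeff_sub]
  congr 1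
  ring

section reprCount

variable {p q r a b e n : ℕ}

lemma reprCount_le_left (hpq : p ≤ q) (hpr : p.Coprime r) (hb : b ≤ p) :
    reprCount p q r a b e n ≤ a := by
  refine (card_le_card_of_injOn (fun t => t.2.1) (fun t ht => ?_) ?_).trans_eq (card_range a)
  · simp only [mem_coe, mem_filter, mem_product, mem_range] at ht
    simpa using ht.1.2.1
  rintro ⟨j, x, y, k⟩ ht ⟨j', x', y', k'⟩ ht' (rfl : x = x')
  simp only [mem_coe, mem_filter, mem_product, mem_range] at ht ht'
  have h : 1 * j + q * (r * y + p * k) = 1 * j' + q * (r * y' + p * k') := by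
    linarith [ht.2, ht'.2]
  obtain ⟨rfl, hrest⟩ := eq_and_eq_of_mul_add_mul_eq (m := q) (Nat.coprime_one_right q)
    (by omega) (by omega) h
  obtain ⟨rfl, rfl⟩ := eq_and_eq_of_mul_add_mul_eq (m := p) hpr (by omega) (by omega) hrest
  rfl

lemma reprCount_le_right (hqr : q.Coprime r) (ha : a ≤ q) :
    reprCount p q r a b e n ≤ b := by
  refine (card_le_card_of_injOn (fun t => t.2.2.1) (fun t ht => ?_) ?_).trans_eq (card_range b)
  · simp only [mem_coe, mem_filter, mem_product, mem_range] at ht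
    simpa using ht.1.2.2.1
  rintro ⟨j, x, y, k⟩ ht ⟨j', x', y', k'⟩ ht' (rfl : y = y')
  simp only [mem_coe, mem_filter, mem_product, mem_range] at ht ht'
  have h : 1 * j + p * (r * x + q * k) = 1 * j' + p * (r * x' + q * k') := by
    linarith [ht.2, ht'.2]
  obtain ⟨rfl, hrest⟩ := eq_and_eq_of_mul_add_mul_eq (m := p) (Nat.coprime_one_right p)
    (by omega) (by omega) h
  obtain ⟨rfl, rfl⟩ := eq_and_eq_of_mul_add_mul_eq (m := q) hqr (by omega) (by omega) hrest
  rfl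

lemma reprCount_le_min (hpq : p ≤ q) (hpr : p.Coprime r) (hqr : q.Coprime r) (ha : a ≤ q)
    (hb : b ≤ p) : reprCount p q r a b e n ≤ min a b :=
  le_min (reprCount_le_left hpq hpr hb) (reprCount_le_right hqr ha)

end reprCount

theorem abs_cyclotomic_coeff_le {p q r ρ σ : ℕ} (hp : p.Prime) (hq : q.Prime) (hr : r.Prime)
    (hpq : p < q) (hqr : q < r) (hρσ : 1 + p * q = (ρ + 1) * p + (σ + 1) * q) (n : ℕ) :
    |(cyclotomic (p * q * r) ℤ).coeff n|
      ≤ (min (ρ + 1) (σ + 1) + min (q - 1 - ρ) (p - 1 - σ) : ℕ) := by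
  obtain ⟨hρ, hσ⟩ := add_one_le_of_one_add_mul_eq hp.two_le hq.two_le hρσ
  have hp_r : p.Coprime r := (Nat.coprime_primes hp hr).2 (by omega)
  have hq_r : q.Coprime r := (Nat.coprime_primes hq hr).2 (by omega)
  have hrpq : ¬ r ∣ p * q := fun h =>
    hr.one_lt.ne' ((Nat.Coprime.mul_left hp_r hq_r).symm.eq_one_of_dvd h)
  have hu : q - 1 - ρ ≤ q := by omega
  have hv : p - 1 - σ ≤ p := by omega
  have h₁ := reprCount_le_min (e := 0) (n := n) hpq.le hp_r hq_r hρ hσ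
  have h₂ := reprCount_le_min (e := q) (n := n) hpq.le hp_r hq_r hρ hσ
  have h₃ := reprCount_le_min (e := r) (n := n) hpq.le hp_r hq_r hu hv
  have h₄ := reprCount_le_min (e := q + r) (n := n) hpq.le hp_r hq_r hu hv
  rw [cyclotomic_coeff_eq_reprCount hp hq hr hpq.ne hrpq hρσ, abs_le]
  constructor <;> omega

theorem stmt17_general (p q : ℕ) (hp : p.Prime) (hq : q.Prime) (hpq : p < q)
    (ρ σ : ℕ) (hρσ : 1 + p * q = (ρ + 1) * p + (σ + 1) * q) :
    ∀ r k : ℕ, r.Prime → q < r →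
      (ρ ≤ σ → |cyclCoeff (p * q * r) k| ≤ (p : ℤ) + (ρ : ℤ) - (σ : ℤ)) ∧
      (σ < ρ → |cyclCoeff (p * q * r) k| ≤ (q : ℤ) + (σ : ℤ) - (ρ : ℤ)) := by
  intro r k hr hqr
  have hbound := abs_cyclotomic_coeff_le hp hq hr hpq hqr hρσ k
  obtain ⟨hρ, hσ⟩ := add_one_le_of_one_add_mul_eq hp.two_le hq.two_le hρσ
  rw [cyclCoeff]
  constructor <;> intro <;> omega

/-- with `ρ, σ ≥ 0` the unique integers with `1 + pq = (ρ+1)p + (σ+1)q`,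
one has `M(p;q) ≤ p + ρ - σ` if `ρ ≤ σ`, and `M(p;q) ≤ q + σ - ρ` if `ρ > σ`. -/
theorem stmt17 (p q : ℕ) (hp : p.Prime) (hq : q.Prime) (h2p : 2 < p) (hpq : p < q)
    (ρ σ : ℕ) (hρσ : 1 + p * q = (ρ + 1) * p + (σ + 1) * q) :
    ∀ r k : ℕ, r.Prime → q < r →
      (ρ ≤ σ → |cyclCoeff (p * q * r) k| ≤ (p : ℤ) + (ρ : ℤ) - (σ : ℤ)) ∧
      (σ < ρ → |cyclCoeff (p * q * r) k| ≤ (q : ℤ) + (σ : ℤ) - (ρ : ℤ)) :=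
  stmt17_general p q hp hq hpq ρ σ hρσ
end

section
/- Let p ≥ 5 be a prime such that q = 2p - 1 is also a prime. Then M(p; 2p-1) = 3; that is, |a_{p(2p-1)r}(k)| ≤ 3 for every prime r > 2p-1 and every integer k ≥ 0, and there exist a prime r > 2p-1 and an integer k ≥ 0 with |a_{p(2p-1)r}(k)| = 3. -/
/-!
For `q = 2p - 1` one has
`Φ_{pq} = ∑_{j<p-1} x^{jq} + ∑_{j<p-1} x^{p+jq} - ∑_{t<q-2} x^{1+tp}`,
and `1/Φ_{pq} = (1 - x^p)(1 - x^q) / ((1 - x)(1 - x^{pq}))` is the `pq`-periodic series with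
coefficient `1` on residues in `[0, p)`, `-1` on residues in `[q, q + p)` and `0` elsewhere.
Since `Φ_{pqr}(x) = Φ_{pq}(x^r) / Φ_{pq}(x)` for a prime `r > q`, the coefficient `a_{pqr}(n)` is
a signed sum of three sums over arithmetic progressions of exponents `e`, of step `rq` or `rp`.
Along such a progression the numbers `n - e` are congruent modulo `q` (resp. `p`) but pairwise
incongruent modulo `pq`, and a window of length `p` meets each residue class modulo `q`
(resp. `p`) at most once: so each of the three sums lies in `[-1, 1]`. For the lower bound,
Dirichlet's theorem gives a prime `r ≡ q + 3 (mod pq)`, and then `a_{pqr}(q(r + 1)) = -3`.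
-/

open Polynomial

open Finset

noncomputable def arithProgPoly (R : Type*) [Semiring R] (a b M : ℕ) : R[X] :=
  ∑ j ∈ range M, X ^ (a + j * b)

lemma arithProgPoly_mul_X_pow_sub_one {R : Type*} [CommRing R] (a b M : ℕ) :
    arithProgPoly R a b M * (X ^ b - 1) = X ^ a * (X ^ (M * b) - 1) := by
  have h := geom_sum_mul ((X : R[X]) ^ b) M
  simp only [← pow_mul] at h
  rw [arithProgPoly, mul_comm M b, ← h, ← mul_assoc, Finset.mul_sum]
  simp only [pow_add, pow_mul, mul_comm b]

lemma expand_arithProgPoly {R : Type*} [CommSemiring R] (r a b M : ℕ) :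
    expand R r (arithProgPoly R a b M) = arithProgPoly R (r * a) (r * b) M := by
  simp only [arithProgPoly, map_sum, map_pow, expand_X, ← pow_mul]
  exact sum_congr rfl fun j _ => by ring_nf

lemma cyclotomic_mul_mul_X_pow_sub_one (R : Type*) [CommRing R] {p q : ℕ} (hp : p.Prime)
    (hq : q.Prime) (hpq : p ≠ q) :
    cyclotomic (p * q) R * ((X ^ p - 1) * (X ^ q - 1)) = (X ^ (p * q) - 1) * (X - 1) := by
  have := Fact.mk hp
  have hexp := congrArg (expand R q) (cyclotomic_prime_mul_X_sub_one R p)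
  rw [map_mul, cyclotomic_expand_eq_cyclotomic_mul hq
    (fun h => hpq ((Nat.prime_dvd_prime_iff_eq hq hp).mp h).symm)] at hexp
  simp only [map_sub, map_pow, expand_X, map_one, ← pow_mul, mul_comm q p] at hexp
  rw [← hexp, ← cyclotomic_prime_mul_X_sub_one R p]
  ring

lemma cyclotomic_mul_eq_arithProgPoly (R : Type*) [CommRing R] [IsDomain R] {p q : ℕ}
    (hp : p.Prime) (hq : q.Prime) (hqp : q + 1 = 2 * p) :
    cyclotomic (p * q) R =
      arithProgPoly R 0 q (p - 1) + arithProgPoly R p q (p - 1) - arithProgPoly R 1 p (q - 2) := by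
  have hXp : (X ^ p - 1 : R[X]) ≠ 0 := X_pow_sub_C_ne_zero hp.pos 1
  have hXq : (X ^ q - 1 : R[X]) ≠ 0 := X_pow_sub_C_ne_zero hq.pos 1
  refine mul_right_cancel₀ (mul_ne_zero hXp hXq) ?_
  rw [cyclotomic_mul_mul_X_pow_sub_one R hp hq (by have := hp.two_le; omega), eq_comm]
  obtain ⟨m, rfl⟩ : ∃ m, p = m + 2 := ⟨p - 2, by have := hp.two_le; omega⟩
  obtain rfl : q = 2 * m + 3 := by omega
  simp only [show m + 2 - 1 = m + 1 by omega, show 2 * m + 3 - 2 = 2 * m + 1 by omega]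
  linear_combination
    (X ^ (m + 2) - 1 : R[X]) * arithProgPoly_mul_X_pow_sub_one (R := R) 0 (2 * m + 3) (m + 1)
    + (X ^ (m + 2) - 1 : R[X]) *
      arithProgPoly_mul_X_pow_sub_one (R := R) (m + 2) (2 * m + 3) (m + 1)
    - (X ^ (2 * m + 3) - 1 : R[X]) * arithProgPoly_mul_X_pow_sub_one (R := R) 1 (m + 2) (2 * m + 1)

lemma PowerSeries.mk_indicator_mod_mul_one_sub_X_pow {R : Type*} [Ring R] {N : ℕ}
    {s : Finset ℕ} (hs : ∀ i ∈ s, i < N) :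
    mk (fun n => if n % N ∈ s then (1 : R) else 0) * (1 - X ^ N) = ∑ i ∈ s, X ^ i := by
  ext n
  simp only [mul_sub, mul_one, map_sub, coeff_mul_X_pow', coeff_mk, map_sum, coeff_X_pow]
  rcases lt_or_ge n N with hn | hn
  · simp [Nat.mod_eq_of_lt hn, not_le.mpr hn]
  · have : n ∉ s := fun h => (hs n h).not_ge hn
    simp [hn, this, Nat.mod_eq_sub_mod hn]

def invCyclotomicCoeff (p q n : ℕ) : ℤ :=
  (if n % (p * q) ∈ Ico 0 p then 1 else 0) - (if n % (p * q) ∈ Ico q (q + p) then 1 else 0)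

lemma invCyclotomicCoeff_of_lt {p q n : ℕ} (hn : n < p * q) :
    invCyclotomicCoeff p q n =
      (if n ∈ Ico 0 p then 1 else 0) - (if n ∈ Ico q (q + p) then 1 else 0) := by
  rw [invCyclotomicCoeff, Nat.mod_eq_of_lt hn]

lemma invCyclotomicCoeff_congr {p q x y : ℕ} (h : x ≡ y [MOD p * q]) :
    invCyclotomicCoeff p q x = invCyclotomicCoeff p q y := by
  rw [invCyclotomicCoeff, invCyclotomicCoeff, h]

lemma mk_invCyclotomicCoeff_mul {p q : ℕ} (hp : 2 ≤ p) (hq : 2 ≤ q) :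
    PowerSeries.mk (invCyclotomicCoeff p q) *
        ((1 - PowerSeries.X) * (1 - PowerSeries.X ^ (p * q))) =
      (1 - PowerSeries.X ^ p) * (1 - PowerSeries.X ^ q) := by
  have hlow := PowerSeries.mk_indicator_mod_mul_one_sub_X_pow (R := ℤ) (N := p * q)
    (s := Ico 0 p) fun i hi => by rw [mem_Ico] at hi; nlinarith
  have hhigh := PowerSeries.mk_indicator_mod_mul_one_sub_X_pow (R := ℤ) (N := p * q)
    (s := Ico q (q + p)) fun i hi => by rw [mem_Ico] at hi; nlinarith
  have hshift : ∑ i ∈ Ico q (q + p), (PowerSeries.X : PowerSeries ℤ) ^ i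
      = PowerSeries.X ^ q * ∑ i ∈ range p, PowerSeries.X ^ i := by
    rw [sum_Ico_eq_sum_range, Nat.add_sub_cancel_left, mul_sum]
    simp only [pow_add]
  rw [← range_eq_Ico] at hlow
  rw [hshift] at hhigh
  have hmk : PowerSeries.mk (invCyclotomicCoeff p q) =
      PowerSeries.mk (fun n => if n % (p * q) ∈ range p then (1 : ℤ) else 0) -
        PowerSeries.mk (fun n => if n % (p * q) ∈ Ico q (q + p) then (1 : ℤ) else 0) := by
    ext n; simp [invCyclotomicCoeff]
  rw [hmk]
  linear_combination (1 - PowerSeries.X) * hlow - (1 - PowerSeries.X) * hhigh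
    - (1 - PowerSeries.X ^ q) * geom_sum_mul (PowerSeries.X : PowerSeries ℤ) p

lemma coe_cyclotomic_mul_mk_invCyclotomicCoeff {p q : ℕ} (hp : p.Prime) (hq : q.Prime)
    (hpq : p ≠ q) :
    (cyclotomic (p * q) ℤ : PowerSeries ℤ) * PowerSeries.mk (invCyclotomicCoeff p q) = 1 := by
  have hpoly := congrArg (Polynomial.coeToPowerSeries.ringHom (R := ℤ))
    (cyclotomic_mul_mul_X_pow_sub_one ℤ hp hq hpq)
  simp only [map_mul, map_sub, map_pow, map_one, Polynomial.coeToPowerSeries.ringHom_apply,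
    Polynomial.coe_X] at hpoly
  have hne : ((1 : PowerSeries ℤ) - PowerSeries.X) * (1 - PowerSeries.X ^ (p * q)) ≠ 0 := by
    intro h
    have := congrArg PowerSeries.constantCoeff h
    simp [zero_pow (Nat.mul_ne_zero hp.ne_zero hq.ne_zero)] at this
  refine mul_right_cancel₀ hne ?_
  rw [mul_assoc, mk_invCyclotomicCoeff_mul hp.two_le hq.two_le]
  linear_combination hpoly

lemma coe_cyclotomic_mul_prime_eq {p q r : ℕ} (hp : p.Prime) (hq : q.Prime) (hpq : p ≠ q)
    (hr : r.Prime) (hrpq : ¬r ∣ p * q) :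
    (cyclotomic (p * q * r) ℤ : PowerSeries ℤ) =
      (expand ℤ r (cyclotomic (p * q) ℤ) : PowerSeries ℤ) *
        PowerSeries.mk (invCyclotomicCoeff p q) := by
  rw [cyclotomic_expand_eq_cyclotomic_mul hr hrpq, Polynomial.coe_mul,
    mul_assoc _ _ (PowerSeries.mk _), coe_cyclotomic_mul_mk_invCyclotomicCoeff hp hq hpq, mul_one]

def arithProgCoeff {R : Type*} [AddCommMonoid R] (d : ℕ → R) (a b M n : ℕ) : R :=
  ∑ j ∈ range M, if a + j * b ≤ n then d (n - (a + j * b)) else 0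

lemma coeff_coe_arithProgPoly_mul_mk {R : Type*} [Semiring R] (d : ℕ → R) (a b M n : ℕ) :
    PowerSeries.coeff n ((arithProgPoly R a b M : PowerSeries R) * PowerSeries.mk d) =
      arithProgCoeff d a b M n := by
  rw [arithProgPoly, ← Polynomial.coeToPowerSeries.ringHom_apply, map_sum, sum_mul, map_sum]
  simp only [map_pow, Polynomial.coeToPowerSeries.ringHom_apply, Polynomial.coe_X,
    PowerSeries.coeff_X_pow_mul', PowerSeries.coeff_mk, arithProgCoeff]

lemma cyclCoeff_eq_arithProgCoeff {p q r : ℕ} (hp : p.Prime) (hq : q.Prime)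
    (hqp : q + 1 = 2 * p) (hr : r.Prime) (hqr : q < r) (n : ℕ) :
    cyclCoeff (p * q * r) n =
      arithProgCoeff (invCyclotomicCoeff p q) 0 (r * q) (p - 1) n +
        arithProgCoeff (invCyclotomicCoeff p q) (r * p) (r * q) (p - 1) n -
        arithProgCoeff (invCyclotomicCoeff p q) r (r * p) (q - 2) n := by
  have hrpq : ¬r ∣ p * q := fun h => by
    rcases (Nat.Prime.dvd_mul hr).mp h with h | h
    · have := Nat.le_of_dvd hp.pos h; omega
    · have := Nat.le_of_dvd hq.pos h; omega
  rw [cyclCoeff, ← Polynomial.coeff_coe,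
    coe_cyclotomic_mul_prime_eq hp hq (by have := hp.two_le; omega) hr hrpq,
    cyclotomic_mul_eq_arithProgPoly ℤ hp hq hqp]
  simp only [map_add, map_sub, expand_arithProgPoly, mul_zero, mul_one, Polynomial.coe_add,
    Polynomial.coe_sub, add_mul, sub_mul, coeff_coe_arithProgPoly_mul_mk]

lemma Nat.ModEq.of_mod_mem_Ico {N b w v x y : ℕ} (hb : b ∣ N) (hv : v ≤ w + b)
    (h : x ≡ y [MOD b]) (hx : x % N ∈ Ico w v) (hy : y % N ∈ Ico w v) : x ≡ y [MOD N] := by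
  have hmod : x % N ≡ y % N [MOD b] :=
    ((Nat.mod_modEq x N).of_dvd hb).trans (h.trans ((Nat.mod_modEq y N).of_dvd hb).symm)
  rw [mem_Ico] at hx hy
  exact hmod.eq_of_abs_lt (by rw [abs_lt]; omega)

lemma eq_of_tsub_mod_mem_Ico {N b s r a n w v j k : ℕ} (hbs : b * s = N) (hb : 0 < b)
    (hv : v ≤ w + b) (hrs : s.Coprime r) (hj : j < s) (hk : k < s)
    (hjn : a + j * (r * b) ≤ n) (hkn : a + k * (r * b) ≤ n)
    (hjw : (n - (a + j * (r * b))) % N ∈ Ico w v)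
    (hkw : (n - (a + k * (r * b))) % N ∈ Ico w v) : j = k := by
  have hsum : n - (a + j * (r * b)) + (a + j * (r * b)) =
      n - (a + k * (r * b)) + (a + k * (r * b)) := by
    rw [Nat.sub_add_cancel hjn, Nat.sub_add_cancel hkn]
  have hzero (i : ℕ) : a + i * (r * b) ≡ a [MOD b] :=
    (Nat.modEq_zero_iff_dvd.mpr (dvd_mul_of_dvd_right (dvd_mul_left b r) i)).add_left a
  have hdiffb : n - (a + j * (r * b)) ≡ n - (a + k * (r * b)) [MOD b] :=
    Nat.ModEq.add_right_cancel ((hzero j).trans (hzero k).symm) (by rw [hsum])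
  have hdiffN := hdiffb.of_mod_mem_Ico (hbs ▸ dvd_mul_right b s) hv hjw hkw
  have hprod : j * r * b ≡ k * r * b [MOD s * b] := by
    simpa only [mul_assoc, ← hbs, mul_comm b s] using
      Nat.ModEq.add_left_cancel' a (Nat.ModEq.add_left_cancel hdiffN (by rw [hsum]))
  exact ((Nat.ModEq.mul_right_cancel' hb.ne' hprod).cancel_right_of_coprime hrs).eq_of_lt_of_lt
    hj hk

lemma abs_arithProgCoeff_invCyclotomicCoeff_le_one {p q r a b s M n : ℕ} (hp : 0 < p)
    (hpb : p ≤ b) (hbs : b * s = p * q) (hrs : s.Coprime r) (hM : M ≤ s) :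
    |arithProgCoeff (invCyclotomicCoeff p q) a (r * b) M n| ≤ 1 := by
  let hits (w : ℕ) := (range M).filter fun j =>
    a + j * (r * b) ≤ n ∧ (n - (a + j * (r * b))) % (p * q) ∈ Ico w (w + p)
  have hcount : arithProgCoeff (invCyclotomicCoeff p q) a (r * b) M n =
      (hits 0).card - (hits q).card := by
    rw [card_filter, card_filter, arithProgCoeff, Nat.cast_sum, Nat.cast_sum, ← sum_sub_distrib]
    refine sum_congr rfl fun j _ => ?_
    simp only [invCyclotomicCoeff, zero_add]
    split_ifs <;> simp_all <;> omega
  have hle (w : ℕ) : (hits w).card ≤ 1 := card_le_one.mpr fun j hj k hk => by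
    simp only [hits, mem_filter, mem_range] at hj hk
    exact eq_of_tsub_mod_mem_Ico hbs (by omega) (by omega) hrs (by omega) (by omega)
      hj.2.1 hk.2.1 hj.2.2 hk.2.2
  have hlow := hle 0
  have hhigh := hle q
  rw [hcount, abs_sub_le_iff]
  omega

lemma abs_cyclCoeff_le_three {p q r : ℕ} (hp : p.Prime) (hq : q.Prime) (hqp : q + 1 = 2 * p)
    (hr : r.Prime) (hqr : q < r) (n : ℕ) : |cyclCoeff (p * q * r) n| ≤ 3 := by
  have hpr : p.Coprime r := (Nat.coprime_primes hp hr).mpr (by omega)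
  have hqr' : q.Coprime r := (Nat.coprime_primes hq hr).mpr (by omega)
  have h₁ := abs_arithProgCoeff_invCyclotomicCoeff_le_one (a := 0) (M := p - 1) (n := n)
    hp.pos (by omega) (mul_comm q p) hpr (by omega)
  have h₂ := abs_arithProgCoeff_invCyclotomicCoeff_le_one (a := r * p) (M := p - 1) (n := n)
    hp.pos (by omega) (mul_comm q p) hpr (by omega)
  have h₃ := abs_arithProgCoeff_invCyclotomicCoeff_le_one (a := r) (M := q - 2) (n := n)
    hp.pos le_rfl rfl hqr' (by omega)
  rw [cyclCoeff_eq_arithProgCoeff hp hq hqp hr hqr]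
  rw [abs_le] at h₁ h₂ h₃ ⊢
  constructor <;> linarith

lemma arithProgCoeff_eq_of_lt {R : Type*} [AddCommMonoid R] {d : ℕ → R} {a b M K n : ℕ}
    (hKM : K ≤ M) (hn : n < a + K * b) : arithProgCoeff d a b M n = arithProgCoeff d a b K n := by
  refine (sum_subset (range_subset_range.mpr hKM) fun j _ hj => ?_).symm
  have : K * b ≤ j * b := Nat.mul_le_mul_right b (by simpa using hj)
  exact if_neg (by omega)

lemma ite_le_apply_tsub_of_eq_add {R : Type*} [Zero R] (d : ℕ → R) {c e n : ℕ}
    (h : n = c + e) : (if e ≤ n then d (n - e) else 0) = d c := by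
  simp [h]

lemma cyclCoeff_eq_neg_three {p q r : ℕ} (hp : p.Prime) (hq : q.Prime) (hqp : q + 1 = 2 * p)
    (hp5 : 5 ≤ p) (hr : r.Prime) (hqr : q < r) (hrmod : r ≡ q + 3 [MOD p * q]) :
    cyclCoeff (p * q * r) (q * (r + 1)) = -3 := by
  have hres (k v w : ℕ) (h : (q + 3) * k + q = v + w * (p * q)) :
      invCyclotomicCoeff p q (r * k + q) = invCyclotomicCoeff p q v := by
    refine invCyclotomicCoeff_congr (((hrmod.mul_right k).add_right q).trans ?_)
    rw [h]
    exact Nat.add_mul_mod_self_right v w (p * q)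
  rw [cyclCoeff_eq_arithProgCoeff hp hq hqp hr hqr]
  obtain ⟨m, rfl⟩ : ∃ m, p = m + 5 := ⟨p - 5, by omega⟩
  obtain rfl : q = 2 * m + 9 := by omega
  -- Only `j < 2`, `j < 1`, `j < 2` contribute; modulo `pq` the five surviving arguments reduce to
  -- `6m + 27, q, 3m + 12, 4m + 15, m`, giving `(0 - 1) + (-1) - (0 + 1)`.
  rw [arithProgCoeff_eq_of_lt (a := 0) (K := 2) (by omega) (by nlinarith),
    arithProgCoeff_eq_of_lt (a := r * (m + 5)) (K := 1) (by omega) (by nlinarith),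
    arithProgCoeff_eq_of_lt (a := r) (K := 2) (by omega) (by nlinarith)]
  simp only [arithProgCoeff, sum_range_succ, sum_range_zero, zero_add, zero_mul, one_mul]
  have hterm (c e : ℕ) (h : (2 * m + 9) * (r + 1) = c + e) :=
    ite_le_apply_tsub_of_eq_add (invCyclotomicCoeff (m + 5) (2 * m + 9)) h
  rw [hterm (r * (2 * m + 9) + (2 * m + 9)) 0 (by ring),
    hterm (2 * m + 9) (r * (2 * m + 9)) (by ring),
    hterm (r * (m + 4) + (2 * m + 9)) (r * (m + 5) + 0) (by ring),
    hterm (r * (2 * m + 8) + (2 * m + 9)) (r + 0) (by ring),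
    hterm (r * (m + 3) + (2 * m + 9)) (r + r * (m + 5)) (by ring),
    hres (2 * m + 9) (6 * m + 27) 2 (by ring), hres (m + 4) (3 * m + 12) 1 (by ring),
    hres (2 * m + 8) (4 * m + 15) 2 (by ring), hres (m + 3) m 1 (by ring)]
  have hN : 6 * m + 27 < (m + 5) * (2 * m + 9) := by nlinarith
  simp (disch := omega) only [invCyclotomicCoeff_of_lt]
  simp (disch := omega) only [mem_Ico, if_pos, if_neg]
  norm_num

lemma exists_prime_cyclCoeff_eq_neg_three {p q : ℕ} (hp : p.Prime) (hq : q.Prime)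
    (hqp : q + 1 = 2 * p) (hp5 : 5 ≤ p) :
    ∃ r k : ℕ, r.Prime ∧ q < r ∧ cyclCoeff (p * q * r) k = -3 := by
  have hndvd (s : ℕ) (hs : s.Prime) (h : ¬s ∣ q + 3) : (q + 3).Coprime s :=
    ((Nat.Prime.coprime_iff_not_dvd hs).mpr h).symm
  have hp3 : ¬p ∣ q + 3 := fun h => by
    rw [show q + 3 = p * 2 + 2 by omega] at h
    have := Nat.le_of_dvd two_pos ((Nat.dvd_add_right (dvd_mul_right p 2)).mp h)
    omega
  have hq3 : ¬q ∣ q + 3 := fun h => by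
    have := Nat.le_of_dvd three_pos ((Nat.dvd_add_right dvd_rfl).mp h)
    omega
  obtain ⟨r, hqr, hr, hrmod⟩ := Nat.forall_exists_prime_gt_and_modEq q
    (Nat.mul_ne_zero hp.ne_zero hq.ne_zero) ((hndvd p hp hp3).mul_right (hndvd q hq hq3))
  exact ⟨r, q * (r + 1), hr, hqr, cyclCoeff_eq_neg_three hp hq hqp hp5 hr hqr hrmod⟩

/-- if `p ≥ 5` and `q = 2p - 1` are both prime, then `M(p;2p-1) = 3`. -/
theorem stmt19 (p : ℕ) (hp : p.Prime) (hp5 : 5 ≤ p) (hq : (2 * p - 1).Prime) :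
    (∀ r k : ℕ, r.Prime → 2 * p - 1 < r → |cyclCoeff (p * (2 * p - 1) * r) k| ≤ 3) ∧
      ∃ r k : ℕ, r.Prime ∧ 2 * p - 1 < r ∧ |cyclCoeff (p * (2 * p - 1) * r) k| = 3 := by
  have hqp : 2 * p - 1 + 1 = 2 * p := by omega
  refine ⟨fun r k hr hqr => abs_cyclCoeff_le_three hp hq hqp hr hqr k, ?_⟩
  obtain ⟨r, k, hr, hqr, hk⟩ := exists_prime_cyclCoeff_eq_neg_three hp hq hqp hp5
  exact ⟨r, k, hr, hqr, by simp [hk]⟩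
end
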